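/- arXiv:2203.09165 — 7 statements merged into one kernel-verified Lean document; each statement's English description precedes it below -/
import Mathlib

section
/- The q-bracket of the depth function d(λ) (the number of distinct parts of λ) equals q/(1-q), i.e. Σ_{λ∈𝒫} d(λ) q^{|λ|} = (q/(1-q)) · Σ_{λ∈𝒫} q^{|λ|} as formal power series. -/
open PowerSeries Finset

/-- The series `Σ_{λ∈𝒫} f(λ) q^{|λ|}`. -/
noncomputable def partitionSeries (f : ∀ n : ℕ, Nat.Partition n → ℚ) : PowerSeries ℚ :=
  PowerSeries.mk fun n => ∑ p : Nat.Partition n, f n p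

lemma part_le_of_mem {n : ℕ} (p : n.Partition) {s : ℕ} (hs : s ∈ p.parts) : s ≤ n := by
  conv_rhs => rw [← p.parts_sum]
  exact Multiset.single_le_sum (fun x _ => Nat.zero_le x) s hs

lemma partition_heq {a b : ℕ} (h : a = b) (p : a.Partition) (q : b.Partition)
    (hpq : p.parts = q.parts) : HEq p q := by
  subst h
  exact heq_of_eq (Nat.Partition.ext hpq)

lemma key (n : ℕ) :
    ∑ p : n.Partition, p.parts.toFinset.card =
      ∑ j ∈ range n, Fintype.card (Nat.Partition j) := by
  classical
  have h := Finset.card_bij'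
    (s := (univ : Finset (n.Partition)).sigma fun p => p.parts.toFinset)
    (t := (range n).sigma fun j => (univ : Finset (Nat.Partition j)))
    (i := fun a ha => by
      refine ⟨n - a.2, ⟨a.1.parts.erase a.2, ?_, ?_⟩⟩
      · exact fun hi => a.1.parts_pos (Multiset.mem_of_mem_erase hi)
      · rw [mem_sigma, Multiset.mem_toFinset] at ha
        have h1 := Multiset.cons_erase ha.2
        have h2 : a.2 + (a.1.parts.erase a.2).sum = n := by
          rw [← Multiset.sum_cons, h1, a.1.parts_sum]
        omega)
    (j := fun b hb => by
      rw [mem_sigma, mem_range] at hb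
      refine ⟨⟨(n - b.1) ::ₘ b.2.parts, ?_, ?_⟩, n - b.1⟩
      · intro i hi
        rcases Multiset.mem_cons.1 hi with h | h
        · omega
        · exact b.2.parts_pos h
      · rw [Multiset.sum_cons, b.2.parts_sum]; omega)
    ?_ ?_ ?_ ?_
  · rw [Finset.card_sigma, Finset.card_sigma] at h
    simpa using h
  · intro a ha
    rw [mem_sigma, Multiset.mem_toFinset] at ha
    have hle := part_le_of_mem a.1 ha.2
    have hpos := a.1.parts_pos ha.2
    rw [mem_sigma, mem_range]
    refine ⟨?_, mem_univ _⟩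
    dsimp only
    omega
  · intro b hb
    rw [mem_sigma, mem_range] at hb
    rw [mem_sigma, Multiset.mem_toFinset]
    exact ⟨mem_univ _, Multiset.mem_cons_self _ _⟩
  · rintro ⟨p, s⟩ ha
    rw [mem_sigma, Multiset.mem_toFinset] at ha
    dsimp only at ha
    have hle := part_le_of_mem p ha.2
    have hpos := p.parts_pos ha.2
    have h2 : n - (n - s) = s := by omega
    refine Sigma.ext ?_ (heq_of_eq ?_)
    · apply Nat.Partition.ext
      simp only [h2]
      exact Multiset.cons_erase ha.2
    · exact h2
  · rintro ⟨j, μ⟩ hb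
    rw [mem_sigma, mem_range] at hb
    dsimp only at hb
    have hj : n - (n - j) = j := by omega
    refine Sigma.ext hj (partition_heq hj _ _ ?_)
    exact Multiset.erase_cons_head _ _

/-- The q-bracket of the depth function `d(λ)` (number of distinct parts) equals
`q/(1-q)`:  `Σ_λ d(λ) q^{|λ|} = (Σ_{n≥1} q^n) · Σ_λ q^{|λ|}`. -/
theorem qbracket_depth :
    partitionSeries (fun _ p => (p.parts.toFinset.card : ℚ)) =
      (PowerSeries.mk fun n => if n = 0 then (0 : ℚ) else 1) *
        partitionSeries (fun _ _ => 1) := by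
  ext n
  rw [PowerSeries.coeff_mul]
  simp only [partitionSeries, PowerSeries.coeff_mk]
  rw [Finset.Nat.sum_antidiagonal_eq_sum_range_succ_mk]
  have h1 : ∀ k ∈ range (n + 1),
      (if k = 0 then (0:ℚ) else 1) * (∑ _p : Nat.Partition (n - k), (1:ℚ)) =
        (if k = 0 then 0 else (Fintype.card (Nat.Partition (n - k)) : ℚ)) := by
    intro k _
    by_cases hk : k = 0 <;> simp [hk, Finset.card_univ]
  rw [Finset.sum_congr rfl h1, Finset.sum_range_succ']
  simp only [Nat.succ_ne_zero, if_false, if_true, ite_true, ite_false, add_zero, reduceIte]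
  have hL : (∑ p : n.Partition, (p.parts.toFinset.card : ℚ)) =
      ((∑ p : n.Partition, p.parts.toFinset.card : ℕ) : ℚ) := by push_cast; ring
  rw [hL, key n]
  push_cast
  rw [← Finset.sum_range_reflect (fun j => (Fintype.card (Nat.Partition j) : ℚ)) n]
  refine Finset.sum_congr rfl fun i hi => ?_
  rw [mem_range] at hi
  have h2 : n - 1 - i = n - (i + 1) := by omega
  rw [h2]
end

section
/- The q-bracket of the length function ℓ(λ) equals Σ_{m≥1} q^m/(1-q^m), i.e. Σ_{λ∈𝒫} ℓ(λ) q^{|λ|} = (Σ_{m≥1} q^m/(1-q^m)) · Σ_{λ∈𝒫} q^{|λ|} as formal power series. -/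
open PowerSeries

namespace QBracketAux

open Finset

/-- The number of partitions of `l`. -/
def P (l : ℕ) : ℕ := Fintype.card (Nat.Partition l)

lemma count_mul_le {n : ℕ} (p : Nat.Partition n) (m : ℕ) :
    p.parts.count m * m ≤ n := by
  have hle : Multiset.replicate (p.parts.count m) m ≤ p.parts :=
    Multiset.le_count_iff_replicate_le.mp le_rfl
  obtain ⟨u, hu⟩ := Multiset.le_iff_exists_add.mp hle
  have h2 : p.parts.sum = (Multiset.replicate (p.parts.count m) m).sum + u.sum := by
    rw [← Multiset.sum_add, ← hu]
  rw [p.parts_sum, Multiset.sum_replicate, smul_eq_mul] at h2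
  omega

/-- Adding `c` copies of `m` to a partition of `n - c*m`. -/
def addParts {n : ℕ} (m c : ℕ) (hm : 0 < m) (h : c * m ≤ n)
    (q : Nat.Partition (n - c * m)) : Nat.Partition n where
  parts := q.parts + Multiset.replicate c m
  parts_pos := by
    intro i hi
    rcases Multiset.mem_add.1 hi with h' | h'
    · exact q.parts_pos h'
    · rw [Multiset.eq_of_mem_replicate h']; exact hm
  parts_sum := by
    rw [Multiset.sum_add, Multiset.sum_replicate, smul_eq_mul, q.parts_sum]
    omega

def removeEquiv (n m c : ℕ) (hm : 0 < m) (h : c * m ≤ n) :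
    Nat.Partition (n - c * m) ≃ {p : Nat.Partition n // c ≤ p.parts.count m} where
  toFun q := ⟨addParts m c hm h q, by
    simp [addParts, Multiset.count_replicate]⟩
  invFun p :=
    { parts := p.1.parts - Multiset.replicate c m
      parts_pos := fun {i} hi =>
        p.1.parts_pos (Multiset.mem_of_le (Multiset.sub_le_self _ _) hi)
      parts_sum := by
        have hle : Multiset.replicate c m ≤ p.1.parts :=
          Multiset.le_count_iff_replicate_le.mp p.2
        have h1 : p.1.parts - Multiset.replicate c m + Multiset.replicate c m = p.1.parts :=
          tsub_add_cancel_of_le hle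
        have h2 : (p.1.parts - Multiset.replicate c m).sum + c * m = n := by
          have := congrArg Multiset.sum h1
          rw [Multiset.sum_add, Multiset.sum_replicate, smul_eq_mul, p.1.parts_sum] at this
          omega
        omega }
  left_inv q := by
    apply Nat.Partition.ext
    simp [addParts]
  right_inv p := by
    apply Subtype.ext
    apply Nat.Partition.ext
    have hle : Multiset.replicate c m ≤ p.1.parts :=
      Multiset.le_count_iff_replicate_le.mp p.2
    simpa [addParts] using tsub_add_cancel_of_le hle

lemma sum_ite_count (n m c : ℕ) (hm : 0 < m) :
    (∑ p : Nat.Partition n, if c ≤ p.parts.count m then 1 else 0) =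
      if c * m ≤ n then P (n - c * m) else 0 := by
  split_ifs with h
  · rw [Finset.sum_boole]
    simp only [Nat.cast_id]
    rw [← Fintype.card_subtype, ← Fintype.card_congr (removeEquiv n m c hm h)]
    rfl
  · rw [Finset.sum_eq_zero]
    intro p _
    have h1 := count_mul_le p m
    have h2 : p.parts.count m < c := by
      by_contra hcon
      push_neg at hcon
      have : c * m ≤ p.parts.count m * m := Nat.mul_le_mul_right m hcon
      omega
    simp [Nat.not_le.mpr h2]

lemma card_parts_eq (n : ℕ) (p : Nat.Partition n) :
    Multiset.card p.parts =
      ∑ m ∈ range (n+1), ∑ j ∈ range (n+1), (if j + 1 ≤ p.parts.count m then 1 else 0) := by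
  have h1 : Multiset.card p.parts = ∑ m ∈ range (n+1), p.parts.count m := by
    rw [← Multiset.toFinset_sum_count_eq]
    apply Finset.sum_subset
    · intro m hm
      rw [Multiset.mem_toFinset] at hm
      have := Multiset.le_sum_of_mem hm
      rw [p.parts_sum] at this
      simp; omega
    · intro m _ hm
      rw [Multiset.mem_toFinset] at hm
      exact Multiset.count_eq_zero_of_notMem hm
  rw [h1]
  apply Finset.sum_congr rfl
  intro m _
  have hcle : p.parts.count m ≤ n := by
    rcases Nat.eq_zero_or_pos m with rfl | hm
    · have : p.parts.count 0 = 0 := Multiset.count_eq_zero_of_notMem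
        (fun hmem => absurd (p.parts_pos hmem) (lt_irrefl 0))
      omega
    · have := count_mul_le p m
      nlinarith
  rw [Finset.sum_boole]
  have : (Finset.range (n+1)).filter (fun j => j + 1 ≤ p.parts.count m) =
      Finset.range (p.parts.count m) := by
    ext j; simp; omega
  rw [this, Finset.card_range, Nat.cast_id]

/-- The key combinatorial identity over ℕ. -/
lemma key (n : ℕ) :
    (∑ p : Nat.Partition n, Multiset.card p.parts) =
      ∑ k ∈ range (n+1), k.divisors.card * P (n - k) := by
  -- LHS to a sum over a filtered product
  have lhs1 : (∑ p : Nat.Partition n, Multiset.card p.parts) =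
      ∑ m ∈ range (n+1), ∑ j ∈ range (n+1),
        (if (j+1) * m ≤ n ∧ 1 ≤ m then P (n - (j+1) * m) else 0) := by
    simp_rw [card_parts_eq n]
    rw [Finset.sum_comm]
    apply Finset.sum_congr rfl
    intro m _
    rw [Finset.sum_comm]
    apply Finset.sum_congr rfl
    intro j _
    rcases Nat.eq_zero_or_pos m with rfl | hm
    · rw [Finset.sum_eq_zero (fun p _ => by
        have : p.parts.count 0 = 0 := Multiset.count_eq_zero_of_notMem
          (fun hmem => absurd (p.parts_pos hmem) (lt_irrefl 0))
        simp [this])]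
      have : ¬ ((j+1) * 0 ≤ n ∧ 1 ≤ 0) := by omega
      rw [if_neg this]
    · rw [sum_ite_count n m (j+1) hm]
      by_cases hle : (j+1) * m ≤ n
      · rw [if_pos hle, if_pos ⟨hle, hm⟩]
      · rw [if_neg hle, if_neg (fun h => hle h.1)]
  -- RHS to a sum over a filtered product
  have rhs1 : (∑ k ∈ range (n+1), k.divisors.card * P (n - k)) =
      ∑ k ∈ range (n+1), ∑ m ∈ k.divisors, P (n - k) := by
    apply Finset.sum_congr rfl
    intro k _
    rw [Finset.sum_const, smul_eq_mul]
  rw [lhs1, rhs1]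
  -- turn both into sums over filtered products and use a bijection
  rw [← Finset.sum_product']
  have hLf : (∑ x ∈ range (n+1) ×ˢ range (n+1),
        if (x.2+1) * x.1 ≤ n ∧ 1 ≤ x.1 then P (n - (x.2+1) * x.1) else 0) =
      ∑ x ∈ (range (n+1) ×ˢ range (n+1)).filter
          (fun x => (x.2+1) * x.1 ≤ n ∧ 1 ≤ x.1), P (n - (x.2+1) * x.1) :=
    (Finset.sum_filter _ _).symm
  rw [hLf]
  have hRf : (∑ x ∈ (range (n+1) ×ˢ range (n+1)).filter (fun x => x.2 ∈ x.1.divisors),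
        P (n - x.1)) = ∑ k ∈ range (n+1), ∑ m ∈ k.divisors, P (n - k) := by
    rw [Finset.sum_filter, Finset.sum_product]
    apply Finset.sum_congr rfl
    intro k hk
    rw [← Finset.sum_filter]
    apply Finset.sum_congr ?_ (fun _ _ => rfl)
    ext m
    simp only [Finset.mem_filter, Finset.mem_range]
    constructor
    · exact fun h => h.2
    · intro h
      refine ⟨?_, h⟩
      rw [Nat.mem_divisors] at h
      have := Nat.le_of_dvd (Nat.pos_of_ne_zero h.2) h.1
      rw [Finset.mem_range] at hk
      omega
  rw [← hRf]
  refine Finset.sum_nbij' (fun x => ((x.2+1) * x.1, x.1)) (fun x => (x.2, x.1 / x.2 - 1))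
    ?_ ?_ ?_ ?_ ?_
  · rintro ⟨m, j⟩ hx
    simp only [Finset.mem_filter, Finset.mem_product, Finset.mem_range] at hx
    obtain ⟨⟨hm, hj⟩, hle, hm1⟩ := hx
    dsimp only
    rw [Finset.mem_filter, Finset.mem_product, Finset.mem_range, Finset.mem_range,
      Nat.mem_divisors]
    exact ⟨⟨by omega, by nlinarith⟩, dvd_mul_left m (j+1), by positivity⟩
  · rintro ⟨k, m⟩ hx
    rw [Finset.mem_filter, Finset.mem_product, Finset.mem_range, Finset.mem_range,
      Nat.mem_divisors] at hx
    obtain ⟨⟨hk, hm⟩, hdvd, hk0⟩ := hx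
    have hmpos : 0 < m := Nat.pos_of_dvd_of_pos hdvd (Nat.pos_of_ne_zero hk0)
    have hkm : k / m * m = k := Nat.div_mul_cancel hdvd
    have hdivpos : 0 < k / m := Nat.div_pos (Nat.le_of_dvd (Nat.pos_of_ne_zero hk0) hdvd) hmpos
    have hdle : k / m ≤ k := Nat.div_le_self k m
    dsimp only
    rw [Finset.mem_filter, Finset.mem_product, Finset.mem_range, Finset.mem_range]
    refine ⟨⟨by omega, by omega⟩, ?_, hmpos⟩
    have h1 : k / m - 1 + 1 = k / m := by omega
    rw [h1, hkm]; omega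
  · rintro ⟨m, j⟩ hx
    simp only [Finset.mem_filter, Finset.mem_product, Finset.mem_range] at hx
    obtain ⟨⟨hm, hj⟩, hle, hm1⟩ := hx
    have : (j+1) * m / m = j + 1 := Nat.mul_div_cancel _ (by omega)
    simp [this]
  · rintro ⟨k, m⟩ hx
    rw [Finset.mem_filter, Finset.mem_product, Finset.mem_range, Finset.mem_range,
      Nat.mem_divisors] at hx
    obtain ⟨⟨hk, hm⟩, hdvd, hk0⟩ := hx
    have hmpos : 0 < m := Nat.pos_of_dvd_of_pos hdvd (Nat.pos_of_ne_zero hk0)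
    have hkm : k / m * m = k := Nat.div_mul_cancel hdvd
    have hdivpos : 0 < k / m := Nat.div_pos (Nat.le_of_dvd (Nat.pos_of_ne_zero hk0) hdvd) hmpos
    have h1 : k / m - 1 + 1 = k / m := by omega
    simp [h1, hkm]
  · rintro ⟨m, j⟩ _
    rfl

end QBracketAux

/-- The q-bracket of the length function `ℓ(λ)` equals `Σ_{m≥1} q^m/(1-q^m)`,
whose coefficient of `q^n` is the number of divisors of `n`:
`Σ_λ ℓ(λ) q^{|λ|} = (Σ_{m≥1} q^m/(1-q^m)) · Σ_λ q^{|λ|}`. -/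
theorem qbracket_length :
    partitionSeries (fun _ p => (Multiset.card p.parts : ℚ)) =
      (PowerSeries.mk fun n => (n.divisors.card : ℚ)) *
        partitionSeries (fun _ _ => 1) := by
  ext n
  rw [PowerSeries.coeff_mul]
  simp only [partitionSeries, PowerSeries.coeff_mk]
  rw [Finset.Nat.sum_antidiagonal_eq_sum_range_succ_mk]
  have := QBracketAux.key n
  have hcast := congrArg (fun x : ℕ => (x : ℚ)) this
  push_cast at hcast
  convert hcast using 2 with k hk
  simp [QBracketAux.P, Finset.card_univ]
end

section
/- Let f(λ) = Σ_m (-1)^m r_m(λ) be the number of even parts minus the number of odd parts of λ. Then lim_{q→1⁻} (1-q)⟨f⟩_q = −log 2, where ⟨f⟩_q = Σ_{m≥1} (-1)^m q^m/(1-q^m). -/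
open Filter Topology

/-- geometric sum identity -/
lemma my_geom_id (q : ℝ) (n : ℕ) :
    (∑ k ∈ Finset.range n, q ^ k) * (1 - q) = 1 - q ^ n := by
  have h := geom_sum_mul q n
  linear_combination (-1 : ℝ) * h

/-- lower bound for 1 - q^(n+1) -/
lemma my_geom_lb {q : ℝ} (hq0 : 0 ≤ q) (hq1 : q ≤ 1) (n : ℕ) :
    ((n : ℝ) + 1) * q ^ n * (1 - q) ≤ 1 - q ^ (n + 1) := by
  rw [← my_geom_id q (n + 1)]
  have hS : ((n : ℝ) + 1) * q ^ n ≤ ∑ k ∈ Finset.range (n + 1), q ^ k := by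
    calc ((n : ℝ) + 1) * q ^ n = ∑ _k ∈ Finset.range (n + 1), q ^ n := by
          rw [Finset.sum_const, Finset.card_range, nsmul_eq_mul]; push_cast; ring
      _ ≤ ∑ k ∈ Finset.range (n + 1), q ^ k := by
          apply Finset.sum_le_sum
          intro k hk
          exact pow_le_pow_of_le_one hq0 hq1 (Nat.lt_succ_iff.mp (Finset.mem_range.mp hk))
  exact mul_le_mul_of_nonneg_right hS (by linarith)

lemma my_summable_bound : Summable (fun j : ℕ => 1 / ((j : ℝ) + 1) ^ 2) := by
  have h : Summable (fun n : ℕ => 1 / (n : ℝ) ^ 2) := Real.summable_one_div_nat_pow.mpr one_lt_two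
  have := (summable_nat_add_iff 1).mpr h
  simpa using this

/-- harmonic partial sums give log 2 -/
lemma my_hasSum_log2 :
    HasSum (fun j : ℕ => 1 / ((2 * (j : ℝ) + 1) * (2 * (j : ℝ) + 2))) (Real.log 2) := by
  have hnonneg : ∀ j : ℕ, 0 ≤ 1 / ((2 * (j : ℝ) + 1) * (2 * (j : ℝ) + 2)) := by
    intro j; positivity
  rw [hasSum_iff_tendsto_nat_of_nonneg hnonneg]
  have hpartial : ∀ n : ℕ,
      ∑ j ∈ Finset.range n, 1 / ((2 * (j : ℝ) + 1) * (2 * (j : ℝ) + 2))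
        = ((harmonic (2 * n) : ℝ) - (harmonic n : ℝ)) := by
    intro n
    induction n with
    | zero => simp
    | succ n ih =>
      rw [Finset.sum_range_succ, ih]
      have h2 : 2 * (n + 1) = (2 * n + 1) + 1 := by ring
      rw [h2, harmonic_succ, harmonic_succ, harmonic_succ]
      push_cast
      have h1 : (2 * (n : ℝ) + 1) ≠ 0 := by positivity
      have h3 : (2 * (n : ℝ) + 2) ≠ 0 := by positivity
      field_simp
      ring
  simp_rw [hpartial]
  -- harmonic (2n) - harmonic n → log 2
  have h2n : Tendsto (fun n : ℕ => 2 * n) atTop atTop :=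
    tendsto_atTop_atTop.mpr fun b => ⟨b, fun a ha => by omega⟩
  have t1 := Real.tendsto_harmonic_sub_log.comp h2n
  have t2 := Real.tendsto_harmonic_sub_log
  have t3 := (t1.sub t2).add (tendsto_const_nhds (x := Real.log 2))
  rw [sub_self, zero_add] at t3
  apply t3.congr'
  filter_upwards [eventually_gt_atTop 0] with n hn
  have hlog : Real.log ((2 * n : ℕ) : ℝ) = Real.log 2 + Real.log n := by
    push_cast
    rw [Real.log_mul two_ne_zero (Nat.cast_ne_zero.mpr hn.ne')]
  simp only [Function.comp_apply]
  rw [hlog]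
  ring

/-- pointwise limit of the paired terms -/
lemma my_tendsto_pair (j : ℕ) :
    Tendsto
      (fun q : ℝ => -((1 - q) ^ 2 * q ^ (2 * j + 1) /
        ((1 - q ^ (2 * j + 1)) * (1 - q ^ (2 * j + 2)))))
      (nhdsWithin 1 (Set.Ioo (0 : ℝ) 1))
      (𝓝 (-(1 / ((2 * (j : ℝ) + 1) * (2 * (j : ℝ) + 2))))) := by
  set g : ℝ → ℝ := fun q => -(q ^ (2 * j + 1) /
      ((∑ k ∈ Finset.range (2 * j + 1), q ^ k) * (∑ k ∈ Finset.range (2 * j + 2), q ^ k))) with hg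
  have hc : ContinuousAt g 1 := by
    apply ContinuousAt.neg
    apply ContinuousAt.div
    · exact (continuous_pow _).continuousAt
    · exact ((continuous_finset_sum _ fun i _ => continuous_pow i).mul
        (continuous_finset_sum _ fun i _ => continuous_pow i)).continuousAt
    · simp only [one_pow, Finset.sum_const, Finset.card_range, nsmul_eq_mul, mul_one]
      positivity
  have hval : g 1 = -(1 / ((2 * (j : ℝ) + 1) * (2 * (j : ℝ) + 2))) := by
    simp only [hg, one_pow, Finset.sum_const, Finset.card_range, nsmul_eq_mul, mul_one]
    push_cast
    ring
  have htends : Tendsto g (nhdsWithin 1 (Set.Ioo (0 : ℝ) 1))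
      (𝓝 (-(1 / ((2 * (j : ℝ) + 1) * (2 * (j : ℝ) + 2))))) := by
    rw [← hval]
    exact hc.continuousWithinAt.tendsto
  apply htends.congr'
  filter_upwards [self_mem_nhdsWithin] with q hq
  obtain ⟨hq0, hq1⟩ := hq
  have hq1' : (1 : ℝ) - q ≠ 0 := by linarith
  have hS1 : (0 : ℝ) < ∑ k ∈ Finset.range (2 * j + 1), q ^ k := by
    apply Finset.sum_pos (fun k _ => pow_pos hq0 k); simp
  have hS2 : (0 : ℝ) < ∑ k ∈ Finset.range (2 * j + 2), q ^ k := by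
    apply Finset.sum_pos (fun k _ => pow_pos hq0 k); simp
  rw [hg]
  rw [← my_geom_id q (2 * j + 1), ← my_geom_id q (2 * j + 2)]
  rw [neg_inj]
  field_simp

set_option maxHeartbeats 800000 in
/-- With `f(λ) = Σ_m (-1)^m r_m(λ)` (number of even parts minus number of odd parts), one has
`⟨f⟩_q = Σ_{m≥1} (-1)^m q^m/(1-q^m)` and `lim_{q→1⁻} (1-q)⟨f⟩_q = -log 2`,
the limit being taken along real `q ∈ (0,1)`. -/
theorem limit_alternating_parts :
    Tendsto
      (fun q : ℝ => (1 - q) * ∑' m : ℕ, (-1 : ℝ) ^ (m + 1) * q ^ (m + 1) / (1 - q ^ (m + 1)))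
      (nhdsWithin 1 (Set.Ioo (0 : ℝ) 1)) (nhds (-Real.log 2)) := by
  set F : ℝ → ℕ → ℝ := fun q j => -((1 - q) ^ 2 * q ^ (2 * j + 1) /
      ((1 - q ^ (2 * j + 1)) * (1 - q ^ (2 * j + 2)))) with hF
  -- dominated convergence for the paired series
  have hbound : ∀ q ∈ Set.Ioo (0 : ℝ) 1, ∀ j : ℕ, ‖F q j‖ ≤ 1 / ((j : ℝ) + 1) ^ 2 := by
    intro q hq j
    obtain ⟨hq0, hq1⟩ := hq
    have hqj : (0 : ℝ) < q ^ j := pow_pos hq0 j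
    have hd1 : ((j : ℝ) + 1) * q ^ j * (1 - q) ≤ 1 - q ^ (2 * j + 1) := by
      calc ((j : ℝ) + 1) * q ^ j * (1 - q) ≤ 1 - q ^ (j + 1) :=
            my_geom_lb hq0.le hq1.le j
        _ ≤ 1 - q ^ (2 * j + 1) := by
            have := pow_le_pow_of_le_one hq0.le hq1.le (show j + 1 ≤ 2 * j + 1 by omega)
            linarith
    have hd2 : ((j : ℝ) + 1) * q ^ j * (1 - q) ≤ 1 - q ^ (2 * j + 2) := by
      calc ((j : ℝ) + 1) * q ^ j * (1 - q) ≤ 1 - q ^ (j + 1) :=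
            my_geom_lb hq0.le hq1.le j
        _ ≤ 1 - q ^ (2 * j + 2) := by
            have := pow_le_pow_of_le_one hq0.le hq1.le (show j + 1 ≤ 2 * j + 2 by omega)
            linarith
    have hdpos : (0 : ℝ) < ((j : ℝ) + 1) * q ^ j * (1 - q) := by
      have : (0 : ℝ) < 1 - q := by linarith
      positivity
    have hD1 : (0 : ℝ) < 1 - q ^ (2 * j + 1) := lt_of_lt_of_le hdpos hd1
    have hD2 : (0 : ℝ) < 1 - q ^ (2 * j + 2) := lt_of_lt_of_le hdpos hd2
    have hnum : (0 : ℝ) ≤ (1 - q) ^ 2 * q ^ (2 * j + 1) := by positivity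
    rw [hF]
    simp only [norm_neg, Real.norm_eq_abs]
    rw [abs_of_nonneg (div_nonneg hnum (mul_pos hD1 hD2).le)]
    calc (1 - q) ^ 2 * q ^ (2 * j + 1) / ((1 - q ^ (2 * j + 1)) * (1 - q ^ (2 * j + 2)))
        ≤ (1 - q) ^ 2 * q ^ (2 * j + 1) / ((((j : ℝ) + 1) * q ^ j * (1 - q)) ^ 2) := by
          apply div_le_div_of_nonneg_left hnum (by positivity)
          calc (((j : ℝ) + 1) * q ^ j * (1 - q)) ^ 2
              = (((j : ℝ) + 1) * q ^ j * (1 - q)) * (((j : ℝ) + 1) * q ^ j * (1 - q)) := sq _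
            _ ≤ (1 - q ^ (2 * j + 1)) * (1 - q ^ (2 * j + 2)) :=
                mul_le_mul hd1 hd2 hdpos.le hD1.le
      _ = q / ((j : ℝ) + 1) ^ 2 := by
          have h1q : (1 : ℝ) - q ≠ 0 := by linarith
          have hj1 : ((j : ℝ) + 1) ≠ 0 := by positivity
          field_simp
          ring
      _ ≤ 1 / ((j : ℝ) + 1) ^ 2 := by
          apply div_le_div_of_nonneg_right ?_ (by positivity)
          · exact hq1.le
  have hDC : Tendsto (fun q : ℝ => ∑' j : ℕ, F q j)
      (nhdsWithin 1 (Set.Ioo (0 : ℝ) 1))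
      (𝓝 (∑' j : ℕ, -(1 / ((2 * (j : ℝ) + 1) * (2 * (j : ℝ) + 2))))) := by
    apply tendsto_tsum_of_dominated_convergence my_summable_bound my_tendsto_pair
    filter_upwards [self_mem_nhdsWithin] with q hq
    exact hbound q hq
  have hsum : (∑' j : ℕ, -(1 / ((2 * (j : ℝ) + 1) * (2 * (j : ℝ) + 2)))) = -Real.log 2 := by
    rw [tsum_neg, my_hasSum_log2.tsum_eq]
  rw [hsum] at hDC
  apply hDC.congr'
  filter_upwards [self_mem_nhdsWithin] with q hq
  obtain ⟨hq0, hq1⟩ := hq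
  -- rearrange the series into pairs
  set a : ℕ → ℝ := fun m => (-1 : ℝ) ^ (m + 1) * q ^ (m + 1) / (1 - q ^ (m + 1)) with ha
  have hq1' : (0 : ℝ) < 1 - q := by linarith
  have habs : ∀ m : ℕ, ‖a m‖ ≤ (1 / (1 - q)) * q ^ m := by
    intro m
    have hpow : (0 : ℝ) < q ^ (m + 1) := pow_pos hq0 _
    have hlt : q ^ (m + 1) < 1 := pow_lt_one₀ hq0.le hq1 (Nat.succ_ne_zero m)
    have hDm : (0 : ℝ) < 1 - q ^ (m + 1) := by linarith
    have hDm' : 1 - q ≤ 1 - q ^ (m + 1) := by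
      have := pow_le_pow_of_le_one hq0.le hq1.le (show 1 ≤ m + 1 by omega)
      simpa using by linarith [pow_le_pow_of_le_one hq0.le hq1.le (show 1 ≤ m + 1 by omega)]
    rw [ha]
    simp only [Real.norm_eq_abs, abs_div, abs_mul, abs_pow, abs_neg, abs_one, one_pow, one_mul,
      abs_of_nonneg hq0.le, abs_of_nonneg hDm.le]
    rw [div_le_iff₀ hDm, one_div, mul_comm ((1 - q)⁻¹) (q ^ m)]
    calc q ^ (m + 1) = q ^ m * q := pow_succ q m
      _ ≤ q ^ m * 1 := by
          apply mul_le_mul_of_nonneg_left hq1.le (pow_nonneg hq0.le m)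
      _ = q ^ m * (1 - q)⁻¹ * (1 - q) := by
          field_simp
      _ ≤ q ^ m * (1 - q)⁻¹ * (1 - q ^ (m + 1)) := by
          apply mul_le_mul_of_nonneg_left hDm' (by positivity)
  have hsumm : Summable a := by
    apply Summable.of_norm_bounded ((summable_geometric_of_lt_one hq0.le hq1).mul_left _) habs
  have he : Summable (fun k : ℕ => a (2 * k)) :=
    hsumm.comp_injective (fun x y h => by omega)
  have ho : Summable (fun k : ℕ => a (2 * k + 1)) :=
    hsumm.comp_injective (fun x y h => by omega)
  rw [show (∑' m : ℕ, (-1 : ℝ) ^ (m + 1) * q ^ (m + 1) / (1 - q ^ (m + 1))) = ∑' m, a m from rfl,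
    ← tsum_even_add_odd he ho, mul_add, ← tsum_mul_left, ← tsum_mul_left,
    ← Summable.tsum_add (he.mul_left _) (ho.mul_left _)]
  apply tsum_congr
  intro j
  have hD1 : (0 : ℝ) < 1 - q ^ (2 * j + 1) := by
    have : q ^ (2 * j + 1) < 1 := pow_lt_one₀ hq0.le hq1 (by omega)
    linarith
  have hD2 : (0 : ℝ) < 1 - q ^ (2 * j + 2) := by
    have : q ^ (2 * j + 2) < 1 := pow_lt_one₀ hq0.le hq1 (by omega)
    linarith
  have hodd : (-1 : ℝ) ^ (2 * j + 1) = -1 := Odd.neg_one_pow ⟨j, by ring⟩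
  have heven : (-1 : ℝ) ^ (2 * j + 2) = 1 := Even.neg_one_pow ⟨j + 1, by ring⟩
  rw [ha, hF]
  simp only []
  rw [show 2 * j + 1 + 1 = 2 * j + 2 from rfl, hodd, heven]
  field_simp
  ring
end

section
/- For positive integers k₁, k₂ and n ≥ 1, Σ_{n₁+n₂=n, n₁,n₂≥1} n₁^{k₁−1}/(k₁−1)! · n₂^{k₂−1}/(k₂−1)! = n^{k₁+k₂−1}/(k₁+k₂−1)! + Σ_{j=1}^{k₁+k₂−1} α(k₁,k₂,j) n^{j−1}/(j−1)!, where α(k₁,k₂,j) = −[(−1)^{k₁} C(k₁+k₂−1−j, k₂−j) + (−1)^{k₂} C(k₁+k₂−1−j, k₁−j)] · B_{k₁+k₂−j}/(k₁+k₂−j)!. -/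
open Finset

/-- The structure constants `α(k₁,k₂,j)` of the quasi-shuffle product in the
Bernoulli–Seki model, where binomial coefficients with negative lower index vanish
and `B` denotes the Bernoulli numbers (with `B₁ = -1/2`). -/
noncomputable def alphaBS (k₁ k₂ j : ℕ) : ℚ :=
  -(((if j ≤ k₂ then ((-1 : ℚ) ^ k₁ * (k₁ + k₂ - 1 - j).choose (k₂ - j)) else 0) +
      (if j ≤ k₁ then ((-1 : ℚ) ^ k₂ * (k₁ + k₂ - 1 - j).choose (k₁ - j)) else 0)) *
    bernoulli (k₁ + k₂ - j) / (k₁ + k₂ - j).factorial)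

lemma shift_sum (m : ℕ) (c : ℕ → ℚ) (h : c (m+1) = 0) :
    ∑ j ∈ Finset.range (m+1), c (j+1) = (∑ j ∈ Finset.range (m+1), c j) - c 0 := by
  have h1 := Finset.sum_range_succ' c (m+1)
  have h2 := Finset.sum_range_succ c (m+1)
  rw [h2, h] at h1
  linarith [h1]

lemma beta_sum (b : ℕ) : ∀ a : ℕ,
    ∑ j ∈ Finset.range (b+1), (-1:ℚ)^j * (b.choose j) / ((a:ℚ)+1+j) =
      (a.factorial * b.factorial) / (a+b+1).factorial := by
  induction b with
  | zero =>
    intro a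
    have h1 : ((a:ℚ)+1) ≠ 0 := by positivity
    have h2 : (a.factorial : ℚ) ≠ 0 := by exact_mod_cast a.factorial_ne_zero
    simp only [Finset.sum_range_one, pow_zero, Nat.choose_self, Nat.cast_one, one_mul,
      Nat.cast_zero, add_zero, Nat.factorial_one, mul_one, Nat.add_zero, Nat.factorial_succ]
    push_cast
    field_simp
    simp [Finset.sum_range_one, h1]
  | succ b ih =>
    intro a
    set f : ℕ → ℚ := fun j => (-1:ℚ)^j * (b.choose j) / ((a:ℚ)+1+j) with hf
    have key : ∑ j ∈ Finset.range (b+2), (-1:ℚ)^j * ((b+1).choose j) / ((a:ℚ)+1+j)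
        = (∑ j ∈ Finset.range (b+1), f j)
          - ∑ j ∈ Finset.range (b+1), (-1:ℚ)^j * (b.choose j) / (((a+1:ℕ):ℚ)+1+j) := by
      rw [Finset.sum_range_succ' (fun j => (-1:ℚ)^j * ((b+1).choose j) / ((a:ℚ)+1+j)) (b+1)]
      have hcast : ∀ j ∈ Finset.range (b+1),
          (-1:ℚ)^(j+1) * (((b+1).choose (j+1) : ℕ) : ℚ) / ((a:ℚ)+1+((j+1:ℕ):ℚ))
            = f (j+1) + (-((-1:ℚ)^j * (b.choose j) / (((a+1:ℕ):ℚ)+1+j))) := by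
        intro j hj
        rw [Nat.choose_succ_succ]
        simp only [hf]
        push_cast
        have h1 : ((a:ℚ)+1+((j:ℚ)+1)) ≠ 0 := by positivity
        have h2 : ((a:ℚ)+1+1+(j:ℚ)) ≠ 0 := by positivity
        field_simp
        ring
      rw [Finset.sum_congr rfl hcast, Finset.sum_add_distrib]
      have hshift : ∑ j ∈ Finset.range (b+1), f (j+1)
          = (∑ j ∈ Finset.range (b+1), f j) - f 0 := by
        apply shift_sum
        simp [hf, Nat.choose_succ_self]
      rw [hshift]
      have hf0 : f 0 = 1/((a:ℚ)+1) := by simp [hf]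
      have : (-1:ℚ)^0 * (((b+1).choose 0 : ℕ) : ℚ) / ((a:ℚ)+1+((0:ℕ):ℚ)) = 1/((a:ℚ)+1) := by
        simp
      rw [this, hf0, Finset.sum_neg_distrib]
      ring
    rw [key, ih a, ih (a+1)]
    have e1 : (a + 1 + b + 1) = (a + (b+1) + 1) := by ring
    rw [e1]
    have h3 : ((a + (b+1) + 1).factorial : ℚ) ≠ 0 := by exact_mod_cast Nat.factorial_ne_zero _
    have h4 : ((a + b + 1).factorial : ℚ) ≠ 0 := by exact_mod_cast Nat.factorial_ne_zero _
    have hfact : ((a + (b+1) + 1).factorial : ℚ) = (a+b+2) * (a+b+1).factorial := by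
      have : a + (b+1) + 1 = (a+b+1) + 1 := by ring
      rw [this, Nat.factorial_succ]
      push_cast; ring
    have hfa : ((a+1).factorial : ℚ) = (a+1) * a.factorial := by
      rw [Nat.factorial_succ]; push_cast; ring
    have hfb : (((b+1)).factorial : ℚ) = (b+1) * b.factorial := by
      rw [Nat.factorial_succ]; push_cast; ring
    rw [hfact, hfa, hfb]
    field_simp
    ring

open Polynomial in
lemma alt_vandermonde (a b t : ℕ) :
    ∑ i ∈ Finset.range (b+1), (-1:ℚ)^(b-i) * (b.choose i) * ((a+b-i).choose t)
      = (-1:ℚ)^b * (if b ≤ t then ((a.choose (t-b) : ℕ) : ℚ) else 0) := by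
  -- polynomial identity: Σ_i (-1)^(b-i) C(b,i) (X+1)^(a+b-i) = (-1)^b (X+1)^a X^b
  have hpoly : ∑ i ∈ Finset.range (b+1),
        ((-1:ℚ[X])^(b-i) * (C (b.choose i : ℚ)) * (X+1)^(a+b-i))
      = (-1:ℚ[X])^b * ((X+1)^a * X^b) := by
    -- reindex i ↦ b - i
    rw [← Finset.sum_range_reflect]
    simp only [Nat.add_sub_cancel, Nat.succ_sub_one]
    have : ∀ i ∈ Finset.range (b+1),
        (-1:ℚ[X])^(b-(b-i)) * (C (b.choose (b-i) : ℚ)) * (X+1)^(a+b-(b-i))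
          = (X+1)^a * ((C (b.choose i : ℚ)) * (-1:ℚ[X])^i * (X+1)^i) := by
      intro i hi
      have hib : i ≤ b := by
        simp only [Finset.mem_range] at hi; omega
      rw [Nat.sub_sub_self hib, Nat.choose_symm hib]
      have : a + b - (b - i) = a + i := by omega
      rw [this, pow_add]
      ring
    rw [Finset.sum_congr rfl this, ← Finset.mul_sum,
      show (-1:ℚ[X])^b * ((X+1)^a * X^b) = (X+1)^a * ((-1:ℚ[X])^b * X^b) by ring]
    congr 1
    -- Σ_i C(b,i) (-1)^i (X+1)^i = (1 - (X+1))^b = (-X)^b = (-1)^b X^b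
    have h2 : ((-(X+1) : ℚ[X]) + 1)^b = (-1:ℚ[X])^b * X^b := by
      have : ((-(X+1) : ℚ[X]) + 1) = -X := by ring
      rw [this]; rw [neg_pow]
    rw [add_pow (-(X+1) : ℚ[X]) 1 b] at h2
    rw [← h2]
    apply Finset.sum_congr rfl
    intro i hi
    rw [Polynomial.C_eq_natCast, one_pow, mul_one, neg_pow (X+1:ℚ[X]) i,
      mul_comm ((-1:ℚ[X])^i * (X+1)^i) _, ← mul_assoc]
  -- take coefficient t
  have := congrArg (fun p : ℚ[X] => p.coeff t) hpoly
  simp only [Polynomial.finset_sum_coeff] at this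
  -- LHS coefficients
  have hL : ∀ i ∈ Finset.range (b+1),
      ((-1:ℚ[X])^(b-i) * (C (b.choose i : ℚ)) * (X+1)^(a+b-i)).coeff t
        = (-1:ℚ)^(b-i) * (b.choose i) * ((a+b-i).choose t) := by
    intro i _
    rw [show ((-1:ℚ[X])^(b-i) * (C (b.choose i : ℚ)) * (X+1)^(a+b-i))
        = (C ((-1:ℚ)^(b-i) * (b.choose i))) * (X+1)^(a+b-i) by
      rw [map_mul]; congr 1; rw [map_pow]; simp]
    rw [Polynomial.coeff_C_mul, Polynomial.coeff_X_add_one_pow]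
  rw [Finset.sum_congr rfl hL] at this
  rw [this]
  -- RHS coefficient
  rw [show ((-1:ℚ[X])^b * ((X+1)^a * X^b)) = (C ((-1:ℚ)^b)) * ((X+1)^a * X^b) by
    congr 1; rw [map_pow]; simp]
  rw [Polynomial.coeff_C_mul, Polynomial.coeff_mul_X_pow', Polynomial.coeff_X_add_one_pow]

lemma bern_odd (s : ℕ) (h : Odd s) (h2 : s ≠ 1) : bernoulli s = 0 := by
  rw [bernoulli_eq_bernoulli'_of_ne_one h2,
    bernoulli'_eq_zero_of_odd h (by rcases h with ⟨k,rfl⟩; omega)]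

lemma neg_one_pow_par (m n : ℕ) (h : m % 2 = n % 2) : (-1:ℚ)^m = (-1:ℚ)^n := by
  rcases Nat.even_or_odd m with hm | hm
  · have hn : Even n := Nat.even_iff.mpr (by rw [← h]; exact Nat.even_iff.mp hm)
    rw [hm.neg_one_pow, hn.neg_one_pow]
  · have hn : Odd n := Nat.odd_iff.mpr (by rw [← h]; exact Nat.odd_iff.mp hm)
    rw [hm.neg_one_pow, hn.neg_one_pow]

lemma choose_succ_div (m s : ℕ) (hs : 1 ≤ s) :
    (((m+1).choose s : ℕ) : ℚ) / ((m:ℚ)+1) = ((m.choose (s-1) : ℕ) : ℚ) / s := by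
  obtain ⟨s', rfl⟩ : ∃ s', s = s'+1 := ⟨s-1, by omega⟩
  have h := Nat.add_one_mul_choose_eq m s'
  have h1 : ((m:ℚ)+1) ≠ 0 := by positivity
  have h2 : ((s':ℚ)+1) ≠ 0 := by positivity
  rw [div_eq_div_iff h1 (by push_cast; exact h2)]
  push_cast [Nat.add_sub_cancel]
  have := congrArg (fun x : ℕ => (x : ℚ)) h
  push_cast at this
  linarith [this]

lemma key_coef (a b s : ℕ) (hs : 1 ≤ s) (hs2 : s ≤ a+b+1) :
    ∑ i ∈ Finset.range (b+1),
        (if s + i ≤ a+b then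
          bernoulli s * (((a+b+1-i).choose s : ℕ) : ℚ) / ((a+b+1-i : ℕ) : ℚ) *
            ((-1:ℚ)^(b-i) * (b.choose i)) else 0)
      = -(((if a+1 ≤ s then (-1:ℚ)^(a+1) * ((b.choose (s-(a+1)) : ℕ) : ℚ) else 0) +
           (if b+1 ≤ s then (-1:ℚ)^(b+1) * ((a.choose (s-(b+1)) : ℕ) : ℚ) else 0)) *
          bernoulli s / s)
        + (if s = 1 ∧ a = 0 then 1 else 0) := by
  set T : ℕ → ℚ := fun i =>
    bernoulli s / s * ((-1:ℚ)^(b-i) * (b.choose i) * (((a+b-i).choose (s-1) : ℕ) : ℚ)) with hT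
  have step1 : ∀ i ∈ Finset.range (b+1),
      (if s + i ≤ a+b then
        bernoulli s * (((a+b+1-i).choose s : ℕ) : ℚ) / ((a+b+1-i : ℕ) : ℚ) *
          ((-1:ℚ)^(b-i) * (b.choose i)) else 0)
      = T i - (if i = a+b+1-s then T i else 0) := by
    intro i hi
    have hib : i ≤ b := by simp only [Finset.mem_range] at hi; omega
    have hd : (((a+b+1-i).choose s : ℕ) : ℚ) / ((a+b+1-i : ℕ) : ℚ)
        = (((a+b-i).choose (s-1) : ℕ) : ℚ) / s := by
      have e : a+b+1-i = (a+b-i)+1 := by omega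
      rw [e]
      have := choose_succ_div (a+b-i) s hs
      rw [← this]
      congr 1
      push_cast
      ring
    by_cases h : s + i ≤ a+b
    · have hne : i ≠ a+b+1-s := by omega
      simp only [h, if_true, hne, if_false, sub_zero, hT]
      rw [mul_div_assoc, hd]
      ring
    · simp only [h, if_false]
      by_cases h2 : i = a+b+1-s
      · simp only [h2, if_true, sub_self]
      · have hlt : a+b-i < s-1 := by omega
        have : ((a+b-i).choose (s-1)) = 0 := Nat.choose_eq_zero_of_lt hlt
        simp [hT, this]
  rw [Finset.sum_congr rfl step1, Finset.sum_sub_distrib, Finset.sum_ite_eq' (Finset.range (b+1)) (a+b+1-s) T]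
  -- full sum via alt_vandermonde
  have hfull : ∑ i ∈ Finset.range (b+1), T i
      = bernoulli s / s * ((-1:ℚ)^b * (if b ≤ s-1 then ((a.choose (s-1-b) : ℕ) : ℚ) else 0)) := by
    simp only [hT]
    rw [← Finset.mul_sum]
    congr 1
    exact alt_vandermonde a b (s-1)
  rw [hfull]
  -- boundary term
  have hbd : (if a+b+1-s ∈ Finset.range (b+1) then T (a+b+1-s) else 0)
      = if a+1 ≤ s then bernoulli s / s * ((-1:ℚ)^(s-(a+1)) * ((b.choose (s-(a+1)) : ℕ) : ℚ)) else 0 := by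
    by_cases h : a+1 ≤ s
    · have hmem : a+b+1-s ∈ Finset.range (b+1) := by simp only [Finset.mem_range]; omega
      simp only [hmem, if_true, h, if_true, hT]
      have e1 : b - (a+b+1-s) = s-(a+1) := by omega
      have e2 : a+b-(a+b+1-s) = s-1 := by omega
      have e3 : b.choose (a+b+1-s) = b.choose (s-(a+1)) := by
        rw [show a+b+1-s = b - (s-(a+1)) by omega]
        exact Nat.choose_symm (by omega)
      rw [e1, e2, e3, Nat.choose_self]
      push_cast
      ring
    · have hmem : a+b+1-s ∉ Finset.range (b+1) := by simp only [Finset.mem_range]; omega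
      simp only [hmem, if_false, h, if_false]
  rw [hbd]
  -- final case analysis
  have hb1 : (b ≤ s-1) ↔ (b+1 ≤ s) := by omega
  simp only [hb1]
  rcases Nat.even_or_odd s with he | ho
  · have hsm : s % 2 = 0 := Nat.even_iff.mp he
    have hs1 : ¬(s = 1 ∧ a = 0) := by rintro ⟨h1, _⟩; omega
    rw [if_neg hs1, add_zero]
    by_cases hA : a+1 ≤ s
    · rw [if_pos hA, if_pos hA, neg_one_pow_par (s-(a+1)) (a+1) (by omega)]
      by_cases hB : b+1 ≤ s
      · rw [if_pos hB, if_pos hB, show s-1-b = s-(b+1) by omega]; ring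
      · rw [if_neg hB, if_neg hB]; ring
    · rw [if_neg hA, if_neg hA]
      by_cases hB : b+1 ≤ s
      · rw [if_pos hB, if_pos hB, show s-1-b = s-(b+1) by omega]; ring
      · rw [if_neg hB, if_neg hB]; ring
  · by_cases hs1 : s = 1
    · subst hs1
      by_cases ha : a = 0
      · subst ha
        by_cases hb : b = 0
        · subst hb
          norm_num [bernoulli_one]
        · rw [if_neg (show ¬ (b+1 ≤ 1) by omega), if_neg (show ¬ (b+1 ≤ 1) by omega),
            if_pos (le_refl 1), if_pos (le_refl 1), if_pos (⟨rfl, rfl⟩ : (1 = 1 ∧ 0 = 0))]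
          norm_num [bernoulli_one]
      · rw [if_neg (show ¬ (a+1 ≤ 1) by omega), if_neg (show ¬ (a+1 ≤ 1) by omega),
          if_neg (show ¬ (1 = 1 ∧ a = 0) by tauto)]
        by_cases hb : b = 0
        · subst hb
          rw [if_pos (le_refl 1), if_pos (le_refl 1)]
          norm_num [bernoulli_one]
        · rw [if_neg (show ¬ (b+1 ≤ 1) by omega), if_neg (show ¬ (b+1 ≤ 1) by omega)]
          norm_num [bernoulli_one]
    · have hz : bernoulli s = 0 := bern_odd s ho hs1
      have hns : ¬ (s = 1 ∧ a = 0) := by tauto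
      simp [hz, hns]

lemma choose_fact_aux (a b s : ℕ) (h : a+1 ≤ s) (h2 : s ≤ a+b+1) :
    (((s-1).choose (s-(a+1)) : ℕ) : ℚ) * a.factorial * b.factorial /
        ((s.factorial : ℚ) * ((a+b+1-s).factorial : ℚ))
      = ((b.choose (s-(a+1)) : ℕ) : ℚ) / s := by
  obtain ⟨u, rfl⟩ : ∃ u, s = a+1+u := ⟨s-(a+1), by omega⟩
  have hu : u ≤ b := by omega
  have e1 : a+1+u-1 = a+u := by omega
  have e2 : a+1+u-(a+1) = u := by omega
  have e3 : a+b+1-(a+1+u) = b-u := by omega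
  rw [e1, e2, e3]
  have c1 : (((a+u).choose u : ℕ) : ℚ) = (a+u).factorial / (u.factorial * a.factorial) := by
    rw [Nat.cast_choose ℚ (by omega : u ≤ a+u), show a+u-u = a from by omega]
  have c2 : ((b.choose u : ℕ) : ℚ) = b.factorial / (u.factorial * (b-u).factorial) := by
    rw [Nat.cast_choose ℚ hu]
  have c3 : ((a+1+u).factorial : ℚ) = (a+u+1) * (a+u).factorial := by
    rw [show a+1+u = (a+u)+1 by omega, Nat.factorial_succ]
    push_cast; ring
  rw [c1, c2, c3]
  have n1 : ((a+u).factorial : ℚ) ≠ 0 := by exact_mod_cast Nat.factorial_ne_zero _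
  have n2 : (u.factorial : ℚ) ≠ 0 := by exact_mod_cast Nat.factorial_ne_zero _
  have n3 : (a.factorial : ℚ) ≠ 0 := by exact_mod_cast Nat.factorial_ne_zero _
  have n4 : (b.factorial : ℚ) ≠ 0 := by exact_mod_cast Nat.factorial_ne_zero _
  have n5 : ((b-u).factorial : ℚ) ≠ 0 := by exact_mod_cast Nat.factorial_ne_zero _
  have n6 : ((a+u+1) : ℚ) ≠ 0 := by positivity
  have n7 : ((a+1+u : ℕ) : ℚ) ≠ 0 := by positivity
  have e4 : ((a+1+u : ℕ) : ℚ) = (a+u+1 : ℚ) := by push_cast; ring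
  rw [e4]
  field_simp

lemma alpha_match (a b s : ℕ) (hs : 1 ≤ s) (hs2 : s ≤ a+b+1) :
    alphaBS (a+1) (b+1) (a+b+2-s) / (((a+b+1-s).factorial : ℕ) : ℚ) * (a.factorial * b.factorial)
      = -(((if a+1 ≤ s then (-1:ℚ)^(a+1) * ((b.choose (s-(a+1)) : ℕ) : ℚ) else 0) +
           (if b+1 ≤ s then (-1:ℚ)^(b+1) * ((a.choose (s-(b+1)) : ℕ) : ℚ) else 0)) *
          bernoulli s / s) := by
  have eK : (a+1) + (b+1) - (a+b+2-s) = s := by omega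
  have eK1 : (a+1) + (b+1) - 1 - (a+b+2-s) = s - 1 := by omega
  have hcond1 : (a+b+2-s ≤ b+1) ↔ (a+1 ≤ s) := by omega
  have hcond2 : (a+b+2-s ≤ a+1) ↔ (b+1 ≤ s) := by omega
  have eu1 : (b+1) - (a+b+2-s) = s - (a+1) := by omega
  have eu2 : (a+1) - (a+b+2-s) = s - (b+1) := by omega
  rw [alphaBS]
  simp only [eK, eK1, eu1, eu2, hcond1, hcond2]
  have hfs : (s.factorial : ℚ) ≠ 0 := by exact_mod_cast Nat.factorial_ne_zero _
  have hfr : (((a+b+1-s).factorial : ℕ) : ℚ) ≠ 0 := by exact_mod_cast Nat.factorial_ne_zero _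
  have hsq : ((s:ℚ)) ≠ 0 := by positivity
  have haux1 := choose_fact_aux a b s
  have haux2 : (b+1 ≤ s) → (((s-1).choose (s-(b+1)) : ℕ) : ℚ) * a.factorial * b.factorial /
        ((s.factorial : ℚ) * ((a+b+1-s).factorial : ℚ)) = ((a.choose (s-(b+1)) : ℕ) : ℚ) / s := by
    intro h
    have := choose_fact_aux b a s h (by omega)
    rw [show b+a+1-s = a+b+1-s by omega] at this
    rw [← this]; ring
  by_cases hA : a+1 ≤ s <;> by_cases hB : b+1 ≤ s
  · rw [if_pos hA, if_pos hA, if_pos hB, if_pos hB]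
    have h1 := haux1 hA hs2
    have h2 := haux2 hB
    field_simp at h1 h2 ⊢
    linear_combination ((bernoulli s)*(-1:ℚ)^a) * h1 + ((bernoulli s)*(-1:ℚ)^b) * h2
  · rw [if_pos hA, if_pos hA, if_neg hB, if_neg hB]
    have h1 := haux1 hA hs2
    field_simp at h1 ⊢
    linear_combination ((bernoulli s)*(-1:ℚ)^a) * h1
  · rw [if_neg hA, if_neg hA, if_pos hB, if_pos hB]
    have h2 := haux2 hB
    field_simp at h2 ⊢
    linear_combination ((bernoulli s)*(-1:ℚ)^b) * h2
  · rw [if_neg hA, if_neg hA, if_neg hB, if_neg hB]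
    simp

lemma beta_sum' (a b : ℕ) :
    ∑ i ∈ Finset.range (b+1), (-1:ℚ)^(b-i) * (b.choose i) / ((a+b+1-i : ℕ):ℚ) =
      (a.factorial * b.factorial) / (a+b+1).factorial := by
  rw [← beta_sum b a, ← Finset.sum_range_reflect]
  apply Finset.sum_congr rfl
  intro i hi
  have hib : i ≤ b := by simp only [Finset.mem_range] at hi; omega
  rw [Nat.add_sub_cancel, Nat.sub_sub_self hib, Nat.choose_symm hib]
  rw [show a+b+1-(b-i) = a+1+i from by omega]
  push_cast
  ring

lemma main' (a b n : ℕ) (hn : 1 ≤ n) :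
    ∑ n₁ ∈ Finset.Ico 1 n, ((n₁:ℚ)^a / a.factorial) * (((n - n₁ : ℕ):ℚ)^b / b.factorial)
      = (n:ℚ)^(a+b+1) / (a+b+1).factorial
        + ∑ j ∈ Finset.Icc 1 (a+b+1), alphaBS (a+1) (b+1) j * (n:ℚ)^(j-1) / (j-1).factorial := by
  have hfa : (a.factorial:ℚ) ≠ 0 := by exact_mod_cast a.factorial_ne_zero
  have hfb : (b.factorial:ℚ) ≠ 0 := by exact_mod_cast b.factorial_ne_zero
  have hfab : ((a+b+1).factorial:ℚ) ≠ 0 := by exact_mod_cast Nat.factorial_ne_zero _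
  -- step 1 : binomial expansion and swap
  have step1 : ∑ n₁ ∈ Finset.Ico 1 n, ((n₁:ℚ)^a / a.factorial) * (((n - n₁ : ℕ):ℚ)^b / b.factorial)
      = ∑ i ∈ Finset.range (b+1), ((-1:ℚ)^(b-i) * (b.choose i) * (n:ℚ)^i *
          (∑ m ∈ Finset.Ico 1 n, (m:ℚ)^(a+b-i))) / (a.factorial * b.factorial) := by
    have e1 : ∀ m ∈ Finset.Ico 1 n,
        ((m:ℚ)^a / a.factorial) * (((n - m : ℕ):ℚ)^b / b.factorial)
          = ∑ i ∈ Finset.range (b+1),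
              ((-1:ℚ)^(b-i) * (b.choose i) * (n:ℚ)^i * (m:ℚ)^(a+b-i)) / (a.factorial * b.factorial) := by
      intro m hm
      simp only [Finset.mem_Ico] at hm
      have hcast : ((n - m : ℕ):ℚ) = (n:ℚ) - m := by
        rw [Nat.cast_sub (le_of_lt hm.2)]
      have hexp : ((n:ℚ) - m)^b = ∑ i ∈ Finset.range (b+1),
          (n:ℚ)^i * (-(m:ℚ))^(b-i) * (b.choose i) := by
        rw [sub_eq_add_neg]
        exact add_pow (n:ℚ) (-(m:ℚ)) b
      rw [hcast, div_mul_div_comm, hexp, Finset.mul_sum, ← Finset.sum_div]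
      congr 1
      apply Finset.sum_congr rfl
      intro i hi
      have hib : i ≤ b := by simp only [Finset.mem_range] at hi; omega
      rw [neg_pow, show a+b-i = a+(b-i) by omega, pow_add]
      ring
    rw [Finset.sum_congr rfl e1, Finset.sum_comm]
    apply Finset.sum_congr rfl
    intro i _
    rw [← Finset.sum_div, ← Finset.mul_sum]
  rw [step1]
  -- step 2 : Faulhaber with padding
  set P : ℕ → ℕ → ℚ := fun i s =>
    if s ≤ a+b-i then
      bernoulli s * (((a+b-i+1).choose s : ℕ) : ℚ) * (n:ℚ)^(a+b-i+1-s) / (((a+b-i : ℕ):ℚ)+1)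
    else 0 with hP
  have hpow : ∀ i ∈ Finset.range (b+1), ∑ m ∈ Finset.Ico 1 n, (m:ℚ)^(a+b-i)
      = (∑ s ∈ Finset.range (a+b+2), P i s) - (0:ℚ)^(a+b-i) := by
    intro i hi
    have h1 : ∑ m ∈ Finset.Ico 1 n, (m:ℚ)^(a+b-i)
        = (∑ m ∈ Finset.range n, (m:ℚ)^(a+b-i)) - (0:ℚ)^(a+b-i) := by
      rw [Finset.range_eq_Ico, Finset.sum_eq_sum_Ico_succ_bot hn]
      push_cast
      ring
    rw [h1, sum_range_pow n (a+b-i)]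
    congr 1
    have hsub : Finset.range (a+b-i+1) ⊆ Finset.range (a+b+2) := by
      intro x hx
      simp only [Finset.mem_range] at hx ⊢
      omega
    rw [← Finset.sum_subset hsub (by
      intro s _ hsnot
      simp only [Finset.mem_range, not_lt] at hsnot
      rw [hP]
      simp only
      rw [if_neg (by omega)])]
    apply Finset.sum_congr rfl
    intro s hs
    simp only [Finset.mem_range] at hs
    rw [hP]
    simp only
    rw [if_pos (by omega)]
  -- distribute
  have step2 : ∑ i ∈ Finset.range (b+1), ((-1:ℚ)^(b-i) * (b.choose i) * (n:ℚ)^i *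
          (∑ m ∈ Finset.Ico 1 n, (m:ℚ)^(a+b-i))) / (a.factorial * b.factorial)
      = (∑ s ∈ Finset.range (a+b+2), ∑ i ∈ Finset.range (b+1),
          ((-1:ℚ)^(b-i) * (b.choose i) * (n:ℚ)^i * P i s) / (a.factorial * b.factorial))
        - ∑ i ∈ Finset.range (b+1),
            ((-1:ℚ)^(b-i) * (b.choose i) * (n:ℚ)^i * (0:ℚ)^(a+b-i)) / (a.factorial * b.factorial) := by
    rw [Finset.sum_comm, ← Finset.sum_sub_distrib]
    apply Finset.sum_congr rfl
    intro i hi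
    rw [hpow i hi, mul_sub, Finset.mul_sum, sub_div, Finset.sum_div]
  rw [step2]
  -- the correction sum
  have hcorr : ∑ i ∈ Finset.range (b+1),
      ((-1:ℚ)^(b-i) * (b.choose i) * (n:ℚ)^i * (0:ℚ)^(a+b-i)) / (a.factorial * b.factorial)
      = if a = 0 then (n:ℚ)^(a+b) / (a.factorial * b.factorial) else 0 := by
    by_cases ha : a = 0
    · subst ha
      rw [if_pos rfl]
      rw [Finset.sum_eq_single b]
      · simp
      · intro i hi hne
        have hib : i < b := by simp only [Finset.mem_range] at hi; omega
        rw [zero_pow (by omega : 0+b-i ≠ 0)]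
        ring
      · intro h
        exact absurd (Finset.self_mem_range_succ b) h
    · rw [if_neg ha]
      apply Finset.sum_eq_zero
      intro i hi
      have hib : i ≤ b := by simp only [Finset.mem_range] at hi; omega
      rw [zero_pow (by omega : a+b-i ≠ 0)]
      ring
  rw [hcorr]
  -- per-s scalar extraction
  set S : ℕ → ℚ := fun s => ∑ i ∈ Finset.range (b+1),
      (if s + i ≤ a+b then
        bernoulli s * (((a+b+1-i).choose s : ℕ) : ℚ) / ((a+b+1-i : ℕ) : ℚ) *
          ((-1:ℚ)^(b-i) * (b.choose i)) else 0) with hS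
  have hper : ∀ s ∈ Finset.range (a+b+2),
      ∑ i ∈ Finset.range (b+1),
        ((-1:ℚ)^(b-i) * (b.choose i) * (n:ℚ)^i * P i s) / (a.factorial * b.factorial)
      = S s * ((n:ℚ)^(a+b+1-s) / (a.factorial * b.factorial)) := by
    intro s _
    rw [hS]
    simp only
    rw [Finset.sum_mul]
    apply Finset.sum_congr rfl
    intro i hi
    have hib : i ≤ b := by simp only [Finset.mem_range] at hi; omega
    rw [hP]
    simp only
    by_cases h : s ≤ a+b-i
    · rw [if_pos h, if_pos (by omega : s + i ≤ a+b)]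
      have e1 : a+b-i+1 = a+b+1-i := by omega
      have e2 : (((a+b-i:ℕ):ℚ)+1) = ((a+b+1-i:ℕ):ℚ) := by
        push_cast [Nat.cast_sub (by omega : i ≤ a+b), Nat.cast_sub (by omega : i ≤ a+b+1)]
        ring
      rw [e1, e2, show a+b+1-s = i + (a+b+1-i-s) from by omega, pow_add]
      ring
    · rw [if_neg h, if_neg (by omega : ¬ (s + i ≤ a+b))]
      ring
  rw [Finset.sum_congr rfl hper]
  -- peel off s = 0
  rw [Finset.sum_range_succ' (fun s => S s * ((n:ℚ)^(a+b+1-s) / (a.factorial * b.factorial))) (a+b+1)]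
  -- s = 0 term is the leading term
  have hS0 : S 0 = (a.factorial * b.factorial) / (a+b+1).factorial := by
    rw [hS]
    simp only
    rw [← beta_sum' a b]
    apply Finset.sum_congr rfl
    intro i hi
    have hib : i ≤ b := by simp only [Finset.mem_range] at hi; omega
    rw [if_pos (by omega : 0 + i ≤ a+b)]
    simp [bernoulli_zero]
    ring
  have hlead : S 0 * ((n:ℚ)^(a+b+1-0) / (a.factorial * b.factorial))
      = (n:ℚ)^(a+b+1) / (a+b+1).factorial := by
    rw [hS0]
    rw [Nat.sub_zero]
    field_simp
  -- key_coef for s ≥ 1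
  have hkey : ∀ s ∈ Finset.range (a+b+1),
      S (s+1) * ((n:ℚ)^(a+b+1-(s+1)) / (a.factorial * b.factorial))
      = alphaBS (a+1) (b+1) (a+b+1-s) * (n:ℚ)^(a+b-s) / ((a+b-s).factorial)
        + (if s = 0 ∧ a = 0 then 1 else 0) * ((n:ℚ)^(a+b) / (a.factorial * b.factorial)) := by
    intro s hs
    have hsr : s ≤ a+b := by simp only [Finset.mem_range] at hs; omega
    have hk := key_coef a b (s+1) (by omega) (by omega)
    have ham := alpha_match a b (s+1) (by omega) (by omega)
    rw [hS]
    simp only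
    rw [hk]
    have e1 : a+b+2-(s+1) = a+b+1-s := by omega
    have e2 : a+b+1-(s+1) = a+b-s := by omega
    rw [e1, e2] at ham
    have e3 : a+b+1-(s+1) = a+b-s := by omega
    rw [e3]
    have e4 : (s+1 = 1 ∧ a = 0) ↔ (s = 0 ∧ a = 0) := by omega
    simp only [e4]
    rw [← ham]
    have hfr : (((a+b-s).factorial : ℕ) : ℚ) ≠ 0 := by exact_mod_cast Nat.factorial_ne_zero _
    by_cases hc : s = 0 ∧ a = 0
    · have h1 : (if s = 0 ∧ a = 0 then (1:ℚ) else 0) = 1 := if_pos hc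
      rw [h1]
      rcases hc with ⟨rfl, rfl⟩
      simp only [Nat.sub_zero]
      field_simp
    · have h1 : (if s = 0 ∧ a = 0 then (1:ℚ) else 0) = 0 := if_neg hc
      rw [h1]
      field_simp
      ring
  rw [Finset.sum_congr rfl hkey, Finset.sum_add_distrib]
  -- the ite sum cancels the correction
  have hite : ∑ s ∈ Finset.range (a+b+1),
      (if s = 0 ∧ a = 0 then (1:ℚ) else 0) * ((n:ℚ)^(a+b) / (a.factorial * b.factorial))
      = if a = 0 then (n:ℚ)^(a+b) / (a.factorial * b.factorial) else 0 := by
    by_cases ha : a = 0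
    · rw [if_pos ha, Finset.sum_eq_single 0]
      · rw [if_pos ⟨rfl, ha⟩, one_mul]
      · intro s hs hne
        rw [if_neg (by tauto), zero_mul]
      · intro h
        exact absurd (by simp only [Finset.mem_range]; omega : 0 ∈ Finset.range (a+b+1)) h
    · rw [if_neg ha]
      apply Finset.sum_eq_zero
      intro s _
      rw [if_neg (by tauto), zero_mul]
  rw [hite, hlead]
  -- reindex the alpha sum
  have hreindex : ∑ j ∈ Finset.Icc 1 (a+b+1), alphaBS (a+1) (b+1) j * (n:ℚ)^(j-1) / (j-1).factorial
      = ∑ s ∈ Finset.range (a+b+1), alphaBS (a+1) (b+1) (a+b+1-s) * (n:ℚ)^(a+b-s) / ((a+b-s).factorial) := by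
    refine Finset.sum_nbij' (fun j => a+b+1-j) (fun s => a+b+1-s) ?_ ?_ ?_ ?_ ?_
    · intro j hj; simp only [Finset.mem_Icc] at hj; simp only [Finset.mem_range]; omega
    · intro t ht; simp only [Finset.mem_range] at ht; simp only [Finset.mem_Icc]; omega
    · intro j hj; simp only [Finset.mem_Icc] at hj; omega
    · intro t ht; simp only [Finset.mem_range] at ht; omega
    · intro j hj
      simp only [Finset.mem_Icc] at hj
      rw [show a+b+1-(a+b+1-j) = j from by omega, show a+b-(a+b+1-j) = j-1 from by omega]
  rw [hreindex]
  ring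


/-- Faulhaber-type convolution identity in the Bernoulli–Seki model: for `k₁,k₂ ≥ 1`, `n ≥ 1`,
`Σ_{n₁+n₂=n, n₁,n₂≥1} n₁^{k₁-1}/(k₁-1)! · n₂^{k₂-1}/(k₂-1)!
  = n^{k₁+k₂-1}/(k₁+k₂-1)! + Σ_{j=1}^{k₁+k₂-1} α(k₁,k₂,j) n^{j-1}/(j-1)!`. -/
theorem bernoulli_seki_convolution (k₁ k₂ n : ℕ) (hk₁ : 1 ≤ k₁) (hk₂ : 1 ≤ k₂)
    (hn : 1 ≤ n) :
    ∑ n₁ ∈ Finset.Ico 1 n,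
        ((n₁ : ℚ) ^ (k₁ - 1) / (k₁ - 1).factorial) *
          (((n - n₁ : ℕ) : ℚ) ^ (k₂ - 1) / (k₂ - 1).factorial) =
      (n : ℚ) ^ (k₁ + k₂ - 1) / (k₁ + k₂ - 1).factorial +
        ∑ j ∈ Finset.Icc 1 (k₁ + k₂ - 1),
          alphaBS k₁ k₂ j * (n : ℚ) ^ (j - 1) / (j - 1).factorial := by
  obtain ⟨a, rfl⟩ : ∃ a, k₁ = a+1 := ⟨k₁-1, by omega⟩
  obtain ⟨b, rfl⟩ : ∃ b, k₂ = b+1 := ⟨k₂-1, by omega⟩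
  have h := main' a b n hn
  rw [show a+1-1 = a from rfl, show b+1-1 = b from rfl,
    show (a+1)+(b+1)-1 = a+b+1 from by omega]
  exact h
end

section
/- For k ≥ 1 and d ≥ 0 with k ≥ d+2, the limit lim_{q→1⁻} (1−q)^k Σ_{m,n≥1} (n^{k−1}/(k−1)!) m^d q^{mn} equals ζ(k−d) (along real q ∈ (0,1)). -/
open Filter Topology Polynomial Finset

private lemma exists_expand (k : ℕ) : ∀ P : ℝ[X], P.degree < (k : ℕ) →
    ∃ c : ℕ → ℝ, P = ∑ i ∈ Finset.range k, Polynomial.C (c i) * ascPochhammer ℝ i := by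
  induction k with
  | zero =>
    intro P hP
    refine ⟨fun _ => 0, ?_⟩
    rw [Finset.range_zero, Finset.sum_empty]
    ext m
    exact (degree_lt_iff_coeff_zero P 0).mp (by exact_mod_cast hP) m (Nat.zero_le m)
  | succ k ih =>
    intro P hP
    have hdeg : (P - Polynomial.C (P.coeff k) * ascPochhammer ℝ k).degree < (k : ℕ) := by
      rw [degree_lt_iff_coeff_zero]
      intro m hm
      have hm' : k ≤ m := by exact_mod_cast hm
      rcases eq_or_lt_of_le hm' with h | h
      · have h1 : (ascPochhammer ℝ k).coeff k = 1 := by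
          have := (monic_ascPochhammer ℝ k)
          simpa [ascPochhammer_natDegree] using this.coeff_natDegree
        simp [← h, h1]
      · have h1 : P.coeff m = 0 := by
          apply Polynomial.coeff_eq_zero_of_degree_lt
          exact lt_of_lt_of_le hP (by exact_mod_cast h)
        have h2 : (ascPochhammer ℝ k).coeff m = 0 := by
          apply Polynomial.coeff_eq_zero_of_natDegree_lt
          rwa [ascPochhammer_natDegree]
        simp [h1, h2]
    obtain ⟨c, hc⟩ := ih (P - Polynomial.C (P.coeff k) * ascPochhammer ℝ k) hdeg
    refine ⟨Function.update c k (P.coeff k), ?_⟩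
    rw [Finset.sum_range_succ, Function.update_self]
    have : ∑ i ∈ Finset.range k, Polynomial.C (Function.update c k (P.coeff k) i) * ascPochhammer ℝ i
        = ∑ i ∈ Finset.range k, Polynomial.C (c i) * ascPochhammer ℝ i := by
      refine Finset.sum_congr rfl fun i hi => ?_
      rw [Function.update_of_ne (Finset.mem_range.mp hi).ne]
    rw [this, ← hc]
    ring

private lemma key_expand (k : ℕ) (hk : 1 ≤ k) : ∃ e : ℕ → ℝ, e (k-1) = 1 ∧ ∀ n : ℕ,
    ((n+1:ℕ):ℝ)^(k-1) / (k-1).factorial = ∑ i ∈ Finset.range k, e i * ((n+i).choose i : ℝ) := by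
  set P : ℝ[X] := Polynomial.C ((((k-1).factorial : ℝ))⁻¹) * Polynomial.X^(k-1) with hPdef
  have hdeg : P.degree < (k : ℕ) := by
    refine lt_of_le_of_lt (Polynomial.degree_C_mul_X_pow_le _ _) ?_
    exact_mod_cast Nat.sub_lt (Nat.lt_of_lt_of_le Nat.zero_lt_one hk) Nat.zero_lt_one
  obtain ⟨c, hc⟩ := exists_expand k P hdeg
  have hcoeff : c (k-1) = (((k-1).factorial : ℝ))⁻¹ := by
    have h1 : P.coeff (k-1) = (((k-1).factorial : ℝ))⁻¹ := by
      simp [hPdef, Polynomial.coeff_C_mul, Polynomial.coeff_X_pow]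
    have hrange : Finset.range k = Finset.range ((k-1)+1) := by
      congr 1
      omega
    rw [hrange] at hc
    rw [hc, Polynomial.finset_sum_coeff, Finset.sum_range_succ] at h1
    have hz : ∀ i ∈ Finset.range (k-1),
        (Polynomial.C (c i) * ascPochhammer ℝ i).coeff (k-1) = 0 := by
      intro i hi
      rw [Polynomial.coeff_C_mul]
      have : (ascPochhammer ℝ i).coeff (k-1) = 0 := by
        apply Polynomial.coeff_eq_zero_of_natDegree_lt
        rw [ascPochhammer_natDegree]
        exact Finset.mem_range.mp hi
      simp [this]
    rw [Finset.sum_eq_zero hz, zero_add, Polynomial.coeff_C_mul] at h1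
    have h2 : (ascPochhammer ℝ (k-1)).coeff (k-1) = 1 := by
      have := (monic_ascPochhammer ℝ (k-1))
      simpa [ascPochhammer_natDegree] using this.coeff_natDegree
    rw [h2, mul_one] at h1
    exact h1
  refine ⟨fun i => c i * i.factorial, ?_, ?_⟩
  · show c (k-1) * (((k-1).factorial : ℕ):ℝ) = 1
    rw [hcoeff]
    exact inv_mul_cancel₀ (by exact_mod_cast (k-1).factorial_ne_zero)
  · intro n
    have heval := congrArg (fun Q => Polynomial.eval ((n:ℝ)+1) Q) hc
    simp only [hPdef, Polynomial.eval_mul, Polynomial.eval_C, Polynomial.eval_pow,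
      Polynomial.eval_X, Polynomial.eval_finset_sum] at heval
    have hasc : ∀ i : ℕ, (ascPochhammer ℝ i).eval ((n:ℝ)+1)
        = (i.factorial : ℝ) * ((n+i).choose i : ℝ) := by
      intro i
      have h3 := ascPochhammer_eval_cast ℝ i (n+1)
      rw [ascPochhammer_nat_eq_ascFactorial, Nat.ascFactorial_eq_factorial_mul_choose] at h3
      push_cast at h3 ⊢
      linarith [h3]
    calc ((n+1:ℕ):ℝ)^(k-1) / (k-1).factorial
        = ((k-1).factorial : ℝ)⁻¹ * ((n:ℝ)+1)^(k-1) := by push_cast; ring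
      _ = ∑ i ∈ Finset.range k, (Polynomial.C (c i) * ascPochhammer ℝ i).eval ((n:ℝ)+1) := by
          rw [← Polynomial.eval_finset_sum, ← hc]
          simp [hPdef]
      _ = ∑ i ∈ Finset.range k, (fun i => c i * i.factorial) i * ((n+i).choose i : ℝ) := by
          refine Finset.sum_congr rfl fun i _ => ?_
          rw [Polynomial.eval_mul, Polynomial.eval_C, hasc i]
          ring

private lemma choose_bound (k : ℕ) (hk : 1 ≤ k) (n : ℕ) :
    ((n+1:ℕ):ℝ)^(k-1) / (k-1).factorial ≤ ((n+(k-1)).choose (k-1) : ℝ) := by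
  rw [div_le_iff₀ (by exact_mod_cast (k-1).factorial_pos)]
  have h1 : (n+1)^(k-1) ≤ (k-1).factorial * ((n+(k-1)).choose (k-1)) := by
    calc (n+1)^(k-1) ≤ (n+1).ascFactorial (k-1) := Nat.pow_succ_le_ascFactorial (n+1) (k-1)
      _ = (k-1).factorial * ((n+(k-1)).choose (k-1)) :=
        Nat.ascFactorial_eq_factorial_mul_choose n (k-1)
  calc ((n+1:ℕ):ℝ)^(k-1) = (((n+1)^(k-1) : ℕ) : ℝ) := by push_cast; ring
    _ ≤ (((k-1).factorial * ((n+(k-1)).choose (k-1)) : ℕ) : ℝ) := by exact_mod_cast h1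
    _ = ((n+(k-1)).choose (k-1) : ℝ) * (k-1).factorial := by push_cast; ring

private lemma hasSum_choose' (j : ℕ) {x : ℝ} (hx0 : 0 ≤ x) (hx : x < 1) :
    HasSum (fun n : ℕ => ((n+j).choose j : ℝ) * x^(n+1)) (x / (1-x)^(j+1)) := by
  have h := hasSum_choose_mul_geometric_of_norm_lt_one j
    (r := x) (by rw [Real.norm_eq_abs, abs_lt]; constructor <;> linarith)
  have h2 := h.mul_left x
  have h3 : (fun n : ℕ => ((n+j).choose j : ℝ) * x^(n+1))
      = fun n => x * (((n+j).choose j : ℝ) * x^n) := funext fun n => by ring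
  rw [h3, show x / (1-x)^(j+1) = x * (1/(1-x)^(j+1)) by ring]
  exact h2

private lemma hasSum_S (k : ℕ) (hk : 1 ≤ k) (e : ℕ → ℝ)
    (he : ∀ n : ℕ, ((n+1:ℕ):ℝ)^(k-1) / (k-1).factorial
      = ∑ i ∈ Finset.range k, e i * ((n+i).choose i : ℝ))
    {x : ℝ} (hx0 : 0 ≤ x) (hx : x < 1) :
    HasSum (fun n : ℕ => ((n+1:ℕ):ℝ)^(k-1) / (k-1).factorial * x^(n+1))
      (∑ i ∈ Finset.range k, e i * (x / (1-x)^(i+1))) := by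
  have h1 : ∀ i ∈ Finset.range k, HasSum (fun n : ℕ => e i * (((n+i).choose i : ℝ) * x^(n+1)))
      (e i * (x / (1-x)^(i+1))) := fun i _ => (hasSum_choose' i hx0 hx).mul_left (e i)
  have h2 := hasSum_sum h1
  have hfun : (fun n : ℕ => ∑ i ∈ Finset.range k, e i * (((n+i).choose i : ℝ) * x^(n+1)))
      = fun n : ℕ => ((n+1:ℕ):ℝ)^(k-1) / (k-1).factorial * x^(n+1) := by
    funext n
    rw [he n, Finset.sum_mul]
    exact Finset.sum_congr rfl fun i _ => by ring
  rwa [hfun] at h2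

private lemma S_le (k : ℕ) (hk : 1 ≤ k) {x : ℝ} (hx0 : 0 ≤ x) (hx : x < 1) :
    ∑' n : ℕ, ((n+1:ℕ):ℝ)^(k-1) / (k-1).factorial * x^(n+1) ≤ x / (1-x)^k := by
  have hch := hasSum_choose' (k-1) hx0 hx
  have hk1 : k - 1 + 1 = k := by omega
  rw [hk1] at hch
  have hle : ∀ n : ℕ, ((n+1:ℕ):ℝ)^(k-1) / (k-1).factorial * x^(n+1)
      ≤ ((n+(k-1)).choose (k-1) : ℝ) * x^(n+1) := fun n =>
    mul_le_mul_of_nonneg_right (choose_bound k hk n) (pow_nonneg hx0 _)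
  have hsum : Summable (fun n : ℕ => ((n+1:ℕ):ℝ)^(k-1) / (k-1).factorial * x^(n+1)) := by
    refine Summable.of_nonneg_of_le (fun n => ?_) hle hch.summable
    positivity
  rw [← hch.tsum_eq]
  exact Summable.tsum_le_tsum hle hsum hch.summable

private lemma tendsto_am (k d : ℕ) (hkd : d + 2 ≤ k) (e : ℕ → ℝ) (he1 : e (k-1) = 1)
    (he : ∀ n : ℕ, ((n+1:ℕ):ℝ)^(k-1) / (k-1).factorial
      = ∑ i ∈ Finset.range k, e i * ((n+i).choose i : ℝ)) (m : ℕ) :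
    Tendsto (fun q : ℝ => (1-q)^k * (((m+1:ℕ):ℝ)^d *
      ∑' n : ℕ, ((n+1:ℕ):ℝ)^(k-1) / (k-1).factorial * (q^(m+1))^(n+1)))
      (nhdsWithin 1 (Set.Ioo (0:ℝ) 1)) (nhds (1 / ((m+1:ℕ):ℝ)^(k-d))) := by
  have hk : 1 ≤ k := by omega
  set M := m + 1 with hM
  -- limit of each term of the finite sum
  have hterm : ∀ i ∈ Finset.range k,
      Tendsto (fun q : ℝ => e i * (q^M * (1-q)^(k-1-i) / (∑ j ∈ Finset.range M, q^j)^(i+1)))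
      (nhds 1) (nhds (e i * ((1:ℝ)^M * (0:ℝ)^(k-1-i) / ((M:ℕ):ℝ)^(i+1)))) := by
    intro i _
    have hden : ContinuousAt (fun q : ℝ => (∑ j ∈ Finset.range M, q^j)^(i+1)) 1 :=
      (((continuous_finset_sum _ (fun j _ => continuous_pow j)).pow (i+1)).continuousAt)
    have hnum : ContinuousAt (fun q : ℝ => q^M * (1-q)^(k-1-i)) 1 :=
      ((continuous_pow M).continuousAt).mul
        (((continuous_const.sub continuous_id).pow (k-1-i)).continuousAt)
    have hden1 : (∑ j ∈ Finset.range M, (1:ℝ)^j)^(i+1) = ((M:ℕ):ℝ)^(i+1) := by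
      simp
    have hdne : (∑ j ∈ Finset.range M, (1:ℝ)^j)^(i+1) ≠ 0 := by
      rw [hden1]; positivity
    have := (ContinuousAt.div hnum hden hdne).const_smul (e i)
    have h2 := this.tendsto
    convert h2 using 2
    · rfl
    simp only [Pi.smul_apply, Pi.div_apply, smul_eq_mul]
    rw [hden1]
    norm_num
  have hsum := tendsto_finset_sum (Finset.range k) hterm
  have hval : ∑ i ∈ Finset.range k, e i * ((1:ℝ)^M * (0:ℝ)^(k-1-i) / ((M:ℕ):ℝ)^(i+1))
      = 1 / ((M:ℕ):ℝ)^k := by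
    rw [Finset.sum_eq_single_of_mem (k-1) (Finset.mem_range.mpr (by omega))]
    · rw [he1, show k - 1 - (k-1) = 0 by omega, show k - 1 + 1 = k by omega]
      norm_num
    · intro i hi hne
      have : k - 1 - i ≠ 0 := by
        have := Finset.mem_range.mp hi
        omega
      rw [zero_pow this]
      ring
  have hG : Tendsto (fun q : ℝ => ((M:ℕ):ℝ)^d * ∑ i ∈ Finset.range k,
      e i * (q^M * (1-q)^(k-1-i) / (∑ j ∈ Finset.range M, q^j)^(i+1)))
      (nhds 1) (nhds (1 / ((M:ℕ):ℝ)^(k-d))) := by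
    have h3 := hsum.const_mul (((M:ℕ):ℝ)^d)
    rw [hval] at h3
    have : ((M:ℕ):ℝ)^d * (1 / ((M:ℕ):ℝ)^k) = 1 / ((M:ℕ):ℝ)^(k-d) := by
      have hMk : ((M:ℕ):ℝ)^k = ((M:ℕ):ℝ)^d * ((M:ℕ):ℝ)^(k-d) := by
        rw [← pow_add]
        congr 1
        omega
      have hMne : ((M:ℕ):ℝ) ≠ 0 := by positivity
      field_simp [hMk]
      exact hMk.symm
    rwa [this] at h3
  refine Tendsto.congr' ?_ (hG.mono_left nhdsWithin_le_nhds)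
  filter_upwards [self_mem_nhdsWithin] with q hq
  obtain ⟨hq0, hq1⟩ := hq
  have hx0 : (0:ℝ) ≤ q^M := by positivity
  have hx1 : q^M < 1 := pow_lt_one₀ (le_of_lt hq0) hq1 (by omega)
  have hts := (hasSum_S k hk e he hx0 hx1).tsum_eq
  rw [hts]
  simp only [Finset.mul_sum]
  refine Finset.sum_congr rfl fun i hi => ?_
  have hgeom : 1 - q^M = (1-q) * ∑ j ∈ Finset.range M, q^j := by
    linear_combination geom_sum_mul q M
  have hgpos : 0 < ∑ j ∈ Finset.range M, q^j := by
    apply Finset.sum_pos (fun j _ => by positivity)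
    exact ⟨0, Finset.mem_range.mpr (by omega)⟩
  have hqne : (1:ℝ) - q ≠ 0 := by linarith
  have hpow : (1-q)^k = (1-q)^(i+1) * (1-q)^(k-1-i) := by
    rw [← pow_add]
    congr 1
    have := Finset.mem_range.mp hi
    omega
  rw [hgeom, mul_pow, hpow]
  field_simp

private lemma summable_cn (k : ℕ) (hk : 1 ≤ k) {x : ℝ} (hx0 : 0 ≤ x) (hx : x < 1) :
    Summable (fun n : ℕ => ((n+1:ℕ):ℝ)^(k-1) / (k-1).factorial * x^(n+1)) := by
  refine Summable.of_nonneg_of_le (fun n => by positivity)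
    (fun n => mul_le_mul_of_nonneg_right (choose_bound k hk n) (pow_nonneg hx0 _))
    (hasSum_choose' (k-1) hx0 hx).summable

private lemma bound_am (k d : ℕ) (hkd : d + 2 ≤ k) (m : ℕ) {q : ℝ} (hq0 : 0 < q) (hq1 : q < 1) :
    (1-q)^k * (((m+1:ℕ):ℝ)^d *
        ∑' n : ℕ, ((n+1:ℕ):ℝ)^(k-1) / (k-1).factorial * (q^(m+1))^(n+1))
      ≤ 2^k * (1 / ((m+1:ℕ):ℝ)^(k-d))
        + 3^k * ((1-q)^k * (((m+1:ℕ):ℝ)^d * q^(m+1))) := by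
  have hk : 1 ≤ k := by omega
  set M := m + 1 with hM
  set Mr : ℝ := ((M:ℕ):ℝ) with hMr
  have hMr1 : (1:ℝ) ≤ Mr := by
    rw [hMr]
    exact_mod_cast Nat.one_le_iff_ne_zero.mpr (by omega)
  have hMrpos : (0:ℝ) < Mr := lt_of_lt_of_le one_pos hMr1
  set t : ℝ := 1 - q with ht
  have ht0 : 0 < t := by rw [ht]; linarith
  have ht1 : t < 1 := by rw [ht]; linarith
  set x : ℝ := q ^ M with hx
  have hx0 : 0 ≤ x := by positivity
  have hx1 : x < 1 := pow_lt_one₀ hq0.le hq1 (by omega)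
  set S : ℝ := ∑' n : ℕ, ((n+1:ℕ):ℝ)^(k-1) / (k-1).factorial * x^(n+1) with hS
  have hS0 : 0 ≤ S := tsum_nonneg (fun n => by positivity)
  have hSle : S ≤ x / (1-x)^k := S_le k hk hx0 hx1
  have hb1 : (0:ℝ) ≤ 2^k * (1 / Mr^(k-d)) := by positivity
  have hb2 : (0:ℝ) ≤ 3^k * (t^k * (Mr^d * x)) := by positivity
  have hMk : Mr^k = Mr^d * Mr^(k-d) := by rw [← pow_add]; congr 1; omega
  by_cases hcase : Mr * t ≤ 1/2
  · -- small m case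
    have hber : 1 - Mr * t ≤ x := by
      have h := one_add_mul_le_pow (a := -t) (by linarith) M
      have hqq : 1 + -t = q := by rw [ht]; ring
      rw [hqq] at h
      calc 1 - Mr * t = 1 + (M:ℝ) * (-t) := by rw [hMr]; ring
        _ ≤ q ^ M := h
    have hxhalf : (1:ℝ)/2 ≤ x := by nlinarith [hber, hcase]
    have hgeom : 1 - x = t * ∑ j ∈ Finset.range M, q^j := by
      rw [ht, hx]; linear_combination geom_sum_mul q M
    have hgM : Mr * x ≤ ∑ j ∈ Finset.range M, q^j := by
      have h1 : ∀ j ∈ Finset.range M, x ≤ q^j := fun j hj =>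
        pow_le_pow_of_le_one hq0.le hq1.le (Finset.mem_range.mp hj).le
      calc Mr * x = ∑ _j ∈ Finset.range M, x := by
            rw [Finset.sum_const, Finset.card_range, nsmul_eq_mul, hMr]
        _ ≤ ∑ j ∈ Finset.range M, q^j := Finset.sum_le_sum h1
    have h1x : t * Mr / 2 ≤ 1 - x := by
      rw [hgeom]
      have h2 : Mr * (1/2) ≤ Mr * x := mul_le_mul_of_nonneg_left (by linarith) hMrpos.le
      have h3 : Mr * (1/2) ≤ ∑ j ∈ Finset.range M, q^j := le_trans h2 hgM
      calc t * Mr / 2 = t * (Mr * (1/2)) := by ring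
        _ ≤ t * ∑ j ∈ Finset.range M, q^j := mul_le_mul_of_nonneg_left h3 ht0.le
    have hden_pos : (0:ℝ) < (t * Mr / 2)^k := by positivity
    have hSle2 : S ≤ 1 / (t * Mr / 2)^k :=
      le_trans hSle (div_le_div₀ zero_le_one hx1.le hden_pos
        (pow_le_pow_left₀ (by positivity) h1x k))
    have hfinal : t^k * (Mr^d * S) ≤ 2^k * (1 / Mr^(k-d)) := by
      have h2 : t^k * (Mr^d * S) ≤ t^k * (Mr^d * (1/(t*Mr/2)^k)) :=
        mul_le_mul_of_nonneg_left
          (mul_le_mul_of_nonneg_left hSle2 (by positivity)) (by positivity)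
      refine le_trans h2 (le_of_eq ?_)
      have hMrne : Mr ≠ 0 := hMrpos.ne'
      have htne : t ≠ 0 := ht0.ne'
      have hsplit : (t*Mr/2)^k = t^k * Mr^k / 2^k := by rw [div_pow, mul_pow]
      rw [hsplit, hMk]
      field_simp
    exact le_trans hfinal (le_add_of_nonneg_right hb2)
  · push_neg at hcase
    have hq_exp : q ≤ Real.exp (-t) := by
      have := Real.add_one_le_exp (-t)
      linarith
    have hxle : x ≤ 2/3 := by
      have h1 : x ≤ Real.exp (-t) ^ M := by
        rw [hx]
        exact pow_le_pow_left₀ hq0.le hq_exp M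
      have h2 : Real.exp (-t) ^ M = Real.exp ((M:ℝ) * (-t)) := (Real.exp_nat_mul _ M).symm
      have h3 : Real.exp ((M:ℝ) * (-t)) ≤ Real.exp (-(1/2)) := by
        apply Real.exp_le_exp.mpr
        have : (M:ℝ) = Mr := by rw [hMr]
        nlinarith
      have h4 : Real.exp (-(1/2:ℝ)) ≤ 2/3 := by
        rw [Real.exp_neg]
        have h5 : Real.exp (1/2) * Real.exp (1/2) = Real.exp 1 := by
          rw [← Real.exp_add]; norm_num
        have h6 := Real.exp_one_gt_d9
        have h7 : (3:ℝ)/2 ≤ Real.exp (1/2) := by nlinarith [Real.exp_pos (1/2:ℝ)]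
        rw [show (2:ℝ)/3 = ((3:ℝ)/2)⁻¹ by norm_num]
        exact inv_anti₀ (by norm_num) h7
      linarith
    have h1x : (1:ℝ)/3 ≤ 1 - x := by linarith
    have hSle2 : S ≤ 3^k * x := by
      refine le_trans hSle ?_
      rw [div_le_iff₀ (by positivity : (0:ℝ) < (1-x)^k)]
      have h8 : (1:ℝ) ≤ (3*(1-x))^k := one_le_pow₀ (by linarith)
      calc x = x * 1 := (mul_one x).symm
        _ ≤ x * (3*(1-x))^k := mul_le_mul_of_nonneg_left h8 hx0
        _ = 3^k * x * (1-x)^k := by rw [mul_pow]; ring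
    have hfinal : t^k * (Mr^d * S) ≤ 3^k * (t^k * (Mr^d * x)) := by
      have h2 : Mr^d * S ≤ Mr^d * (3^k * x) :=
        mul_le_mul_of_nonneg_left hSle2 (by positivity)
      calc t^k * (Mr^d * S) ≤ t^k * (Mr^d * (3^k * x)) :=
            mul_le_mul_of_nonneg_left h2 (by positivity)
        _ = 3^k * (t^k * (Mr^d * x)) := by ring
    exact le_trans hfinal (le_add_of_nonneg_left hb1)

set_option maxHeartbeats 1000000 in
private lemma per_q (k d : ℕ) (hkd : d + 2 ≤ k) {q : ℝ} (hq0 : 0 < q) (hq1 : q < 1) :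
    Summable (fun m : ℕ => (1-q)^k * (((m+1:ℕ):ℝ)^d *
        ∑' n : ℕ, ((n+1:ℕ):ℝ)^(k-1) / (k-1).factorial * (q^(m+1))^(n+1)))
    ∧ (1-q)^k * (∑' p : ℕ × ℕ,
          (((p.2 + 1 : ℕ):ℝ)^(k-1) / (k-1).factorial) * ((p.1 + 1 : ℕ):ℝ)^d *
            q^((p.1+1)*(p.2+1)))
      = ∑' m : ℕ, (1-q)^k * (((m+1:ℕ):ℝ)^d *
          ∑' n : ℕ, ((n+1:ℕ):ℝ)^(k-1) / (k-1).factorial * (q^(m+1))^(n+1)) := by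
  have hk : 1 ≤ k := by omega
  set F : ℕ × ℕ → ℝ := fun p =>
    (((p.2 + 1 : ℕ):ℝ)^(k-1) / (k-1).factorial) * ((p.1 + 1 : ℕ):ℝ)^d *
      q^((p.1+1)*(p.2+1)) with hF
  have hF0 : ∀ p, 0 ≤ F p := fun p => by
    simp only [hF]
    positivity
  -- summability of F via comparison with a product
  have hnorm : ‖q‖ < 1 := by rw [Real.norm_eq_abs, abs_lt]; constructor <;> linarith
  have hu0 : Summable (fun m : ℕ => ((m:ℕ):ℝ)^d * q^m) :=
    summable_pow_mul_geometric_of_norm_lt_one d hnorm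
  have hu1 : Summable (fun m : ℕ => ((m+1:ℕ):ℝ)^d * q^(m+1)) := by
    have := (summable_nat_add_iff 1).mpr hu0
    exact this.congr fun m => by push_cast; ring
  have hu : Summable (fun m : ℕ => ((m+1:ℕ):ℝ)^d * q^m) := by
    refine (hu1.mul_left q⁻¹).congr fun m => ?_
    rw [pow_succ]
    field_simp
  have hv : Summable (fun n : ℕ => ((n+1:ℕ):ℝ)^(k-1) / (k-1).factorial * q^(n+1)) :=
    summable_cn k hk hq0.le hq1
  have huv : Summable (fun p : ℕ × ℕ =>
      (((p.1+1:ℕ):ℝ)^d * q^p.1) * (((p.2+1:ℕ):ℝ)^(k-1) / (k-1).factorial * q^(p.2+1))) :=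
    hu.mul_of_nonneg hv (fun m => by positivity) (fun n => by positivity)
  have hFle : ∀ p : ℕ × ℕ, F p ≤
      (((p.1+1:ℕ):ℝ)^d * q^p.1) * (((p.2+1:ℕ):ℝ)^(k-1) / (k-1).factorial * q^(p.2+1)) := by
    rintro ⟨m, n⟩
    simp only [hF]
    have hle : q^((m+1)*(n+1)) ≤ q^(m+(n+1)) := by
      apply pow_le_pow_of_le_one hq0.le hq1.le
      calc m + (n+1) ≤ m*n + (m + (n+1)) := Nat.le_add_left _ _
        _ = (m+1)*(n+1) := by ring
    calc (((n+1:ℕ):ℝ)^(k-1) / (k-1).factorial) * ((m+1:ℕ):ℝ)^d * q^((m+1)*(n+1))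
        ≤ (((n+1:ℕ):ℝ)^(k-1) / (k-1).factorial) * ((m+1:ℕ):ℝ)^d * q^(m+(n+1)) := by
          apply mul_le_mul_of_nonneg_left hle
          positivity
      _ = (((m+1:ℕ):ℝ)^d * q^m) * (((n+1:ℕ):ℝ)^(k-1) / (k-1).factorial * q^(n+1)) := by
          rw [pow_add]
          ring
  have hFsum : Summable F := Summable.of_nonneg_of_le hF0 hFle huv
  have hsplit := (summable_prod_of_nonneg hF0).mp hFsum
  have hinner : ∀ m : ℕ, (∑' n : ℕ, F (m, n))
      = ((m+1:ℕ):ℝ)^d * ∑' n : ℕ, ((n+1:ℕ):ℝ)^(k-1) / (k-1).factorial * (q^(m+1))^(n+1) := by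
    intro m
    rw [← tsum_mul_left]
    refine tsum_congr fun n => ?_
    simp only [hF]
    rw [← pow_mul]
    ring
  constructor
  · refine (hsplit.2.mul_left ((1-q)^k)).congr fun m => ?_
    rw [hinner m]
  · rw [Summable.tsum_prod' hFsum hsplit.1]
    rw [← tsum_mul_left]
    congr 1
    funext m
    rw [← hinner m]

private lemma tail_bound (k d : ℕ) (hkd : d + 2 ≤ k) {q : ℝ} (hq0 : 0 < q) (hq1 : q < 1) :
    Summable (fun m : ℕ => 3^k * ((1-q)^k * (((m+1:ℕ):ℝ)^d * q^(m+1))))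
    ∧ ∑' m : ℕ, 3^k * ((1-q)^k * (((m+1:ℕ):ℝ)^d * q^(m+1)))
      ≤ 3^k * (d.factorial : ℝ) * (1-q) := by
  have ht0 : 0 < 1 - q := by linarith
  have hch := hasSum_choose' d hq0.le hq1
  have hd1 : 1 ≤ d + 1 := by omega
  have hle : ∀ m : ℕ, ((m+1:ℕ):ℝ)^d * q^(m+1)
      ≤ (d.factorial : ℝ) * (((m+d).choose d : ℝ) * q^(m+1)) := by
    intro m
    have h1 := choose_bound (d+1) hd1 m
    simp only [Nat.add_sub_cancel] at h1
    have h2 : ((m+1:ℕ):ℝ)^d ≤ (d.factorial : ℝ) * ((m+d).choose d : ℝ) := by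
      rw [div_le_iff₀ (by exact_mod_cast d.factorial_pos)] at h1
      calc ((m+1:ℕ):ℝ)^d ≤ ((m+d).choose d : ℝ) * (d.factorial : ℝ) := h1
        _ = (d.factorial : ℝ) * ((m+d).choose d : ℝ) := by ring
    calc ((m+1:ℕ):ℝ)^d * q^(m+1) ≤ ((d.factorial : ℝ) * ((m+d).choose d : ℝ)) * q^(m+1) :=
          mul_le_mul_of_nonneg_right h2 (by positivity)
      _ = (d.factorial : ℝ) * (((m+d).choose d : ℝ) * q^(m+1)) := by ring
  have hsumM : Summable (fun m : ℕ => ((m+1:ℕ):ℝ)^d * q^(m+1)) :=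
    Summable.of_nonneg_of_le (fun m => by positivity) hle ((hch.summable).mul_left _)
  have htsumM : ∑' m : ℕ, ((m+1:ℕ):ℝ)^d * q^(m+1)
      ≤ (d.factorial : ℝ) * (q / (1-q)^(d+1)) := by
    have h3 := (hch.mul_left ((d.factorial : ℝ))).tsum_eq
    calc ∑' m : ℕ, ((m+1:ℕ):ℝ)^d * q^(m+1)
        ≤ ∑' m : ℕ, (d.factorial : ℝ) * (((m+d).choose d : ℝ) * q^(m+1)) :=
          Summable.tsum_le_tsum hle hsumM (hch.summable.mul_left _)
      _ = (d.factorial : ℝ) * (q / (1-q)^(d+1)) := h3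
  constructor
  · exact (hsumM.mul_left ((3:ℝ)^k * (1-q)^k)).congr fun m => by ring
  · have heq : ∑' m : ℕ, 3^k * ((1-q)^k * (((m+1:ℕ):ℝ)^d * q^(m+1)))
        = (3^k * (1-q)^k) * ∑' m : ℕ, ((m+1:ℕ):ℝ)^d * q^(m+1) := by
      rw [← tsum_mul_left]
      congr 1
      funext m
      ring
    rw [heq]
    have hkey : (3:ℝ)^k * (1-q)^k * ((d.factorial : ℝ) * (q / (1-q)^(d+1)))
        ≤ 3^k * (d.factorial : ℝ) * (1-q) := by
      have hpow : (1-q)^k = (1-q)^(d+1) * (1-q)^(k-d-1) := by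
        rw [← pow_add]
        congr 1
        omega
      have h4 : (1-q)^(k-d-1) ≤ (1-q) := by
        have := pow_le_pow_of_le_one ht0.le (by linarith : 1-q ≤ 1)
          (show 1 ≤ k-d-1 by omega)
        simpa using this
      have h5 : (0:ℝ) < (1-q)^(d+1) := by positivity
      calc (3:ℝ)^k * (1-q)^k * ((d.factorial : ℝ) * (q / (1-q)^(d+1)))
          = 3^k * (d.factorial : ℝ) * (q * (1-q)^(k-d-1)) := by
            rw [hpow]
            field_simp
        _ ≤ 3^k * (d.factorial : ℝ) * (1-q) := by
            have h6 : q * (1-q)^(k-d-1) ≤ 1-q := by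
              calc q * (1-q)^(k-d-1) ≤ 1 * (1-q)^(k-d-1) := by
                    apply mul_le_mul_of_nonneg_right (by linarith) (by positivity)
                _ = (1-q)^(k-d-1) := one_mul _
                _ ≤ 1-q := h4
            apply mul_le_mul_of_nonneg_left h6 (by positivity)
    calc (3:ℝ)^k * (1-q)^k * ∑' m : ℕ, ((m+1:ℕ):ℝ)^d * q^(m+1)
        ≤ 3^k * (1-q)^k * ((d.factorial : ℝ) * (q / (1-q)^(d+1))) := by
          apply mul_le_mul_of_nonneg_left htsumM (by positivity)
      _ ≤ 3^k * (d.factorial : ℝ) * (1-q) := hkey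

set_option maxHeartbeats 1000000 in
/-- For `k ≥ d+2`, `lim_{q→1⁻} (1-q)^k Σ_{m,n≥1} (n^{k-1}/(k-1)!) m^d q^{mn} = ζ(k-d)`,
the limit taken along real `q ∈ (0,1)`, with `ζ(k-d) = Σ_{m≥1} m^{-(k-d)}`. -/
theorem depth_one_limit (k d : ℕ) (hkd : d + 2 ≤ k) :
    Tendsto
      (fun q : ℝ => (1 - q) ^ k *
        ∑' p : ℕ × ℕ,
          (((p.2 + 1 : ℕ) : ℝ) ^ (k - 1) / (k - 1).factorial) * ((p.1 + 1 : ℕ) : ℝ) ^ d *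
            q ^ ((p.1 + 1) * (p.2 + 1)))
      (nhdsWithin 1 (Set.Ioo (0 : ℝ) 1))
      (nhds (∑' m : ℕ, 1 / ((m + 1 : ℕ) : ℝ) ^ (k - d))) := by
  obtain ⟨e, he1, he⟩ := key_expand k (by omega)
  set ℓ : ℕ → ℝ := fun m => 1 / ((m + 1 : ℕ) : ℝ) ^ (k - d) with hℓ
  have hℓ0 : ∀ m, 0 ≤ ℓ m := fun m => by simp only [hℓ]; positivity
  have hℓsum : Summable ℓ := by
    have h1 : Summable (fun n : ℕ => 1 / (n:ℝ)^(k-d)) :=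
      Real.summable_one_div_nat_pow.mpr (by omega)
    exact (summable_nat_add_iff 1).mpr h1
  have key : Tendsto (fun q : ℝ => ∑' m : ℕ, (1-q)^k * (((m+1:ℕ):ℝ)^d *
      ∑' n : ℕ, ((n+1:ℕ):ℝ)^(k-1) / (k-1).factorial * (q^(m+1))^(n+1)))
      (nhdsWithin 1 (Set.Ioo (0:ℝ) 1)) (nhds (∑' m, ℓ m)) := by
    rw [Metric.tendsto_nhds]
    intro ε hε
    -- choose the cutoff M0
    have htail : Tendsto (fun M0 : ℕ => ∑' m : ℕ, ((2:ℝ)^k + 1) * ℓ (m + M0)) atTop (nhds 0) :=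
      tendsto_sum_nat_add (f := fun m => ((2:ℝ)^k + 1) * ℓ m)
    obtain ⟨M0, hM0⟩ := (htail.eventually_lt_const (show (0:ℝ) < ε/3 by positivity)).exists
    -- finite part
    have hfin := tendsto_finset_sum (Finset.range M0)
      (fun m _ => tendsto_am k d hkd e he1 he m)
    have hfin' := Metric.tendsto_nhds.mp hfin (ε/3) (by positivity)
    -- eventually 1 - q is small
    set C : ℝ := 3^k * (d.factorial : ℝ) with hC
    have hC0 : 0 ≤ C := by positivity
    have hcont : Tendsto (fun q : ℝ => 1 - q) (nhdsWithin 1 (Set.Ioo (0:ℝ) 1)) (nhds 0) := by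
      have h2 : Tendsto (fun q : ℝ => 1 - q) (nhds (1:ℝ)) (nhds (1-1)) :=
        (continuous_const.sub continuous_id).tendsto 1
      simpa using h2.mono_left nhdsWithin_le_nhds
    have hball := hcont.eventually_lt_const
      (show (0:ℝ) < ε/(3*(C+1)) by positivity)
    filter_upwards [hfin', hball, self_mem_nhdsWithin] with q hq1 hq2 hq3
    obtain ⟨hq0, hqlt1⟩ := hq3
    obtain ⟨hAsum, -⟩ := per_q k d hkd hq0 hqlt1
    obtain ⟨hb2sum, hb2le⟩ := tail_bound k d hkd hq0 hqlt1
    set fA : ℕ → ℝ := fun m => (1-q)^k * (((m+1:ℕ):ℝ)^d *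
      ∑' n : ℕ, ((n+1:ℕ):ℝ)^(k-1) / (k-1).factorial * (q^(m+1))^(n+1)) with hfA
    set b2 : ℕ → ℝ := fun m => 3^k * ((1-q)^k * (((m+1:ℕ):ℝ)^d * q^(m+1))) with hb2
    have hfA0 : ∀ m, 0 ≤ fA m := fun m => by
      simp only [hfA]
      have h1 : 0 ≤ ∑' n : ℕ, ((n+1:ℕ):ℝ)^(k-1) / (k-1).factorial * (q^(m+1))^(n+1) :=
        tsum_nonneg fun n => by positivity
      have h1q : (0:ℝ) ≤ 1 - q := by linarith
      exact mul_nonneg (pow_nonneg h1q k) (mul_nonneg (by positivity) h1)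
    have hb20 : ∀ m, 0 ≤ b2 m := fun m => by
      simp only [hb2]
      have h1q : (0:ℝ) ≤ 1 - q := by linarith
      have : (0:ℝ) ≤ ((m+1:ℕ):ℝ)^d * q^(m+1) := by positivity
      exact mul_nonneg (by positivity) (mul_nonneg (pow_nonneg h1q k) this)
    have hsplitA := Summable.sum_add_tsum_nat_add M0 hAsum
    have hsplitL := Summable.sum_add_tsum_nat_add M0 hℓsum
    have hAshift : Summable (fun m => fA (m + M0)) := (summable_nat_add_iff M0).mpr hAsum
    have hLshift : Summable (fun m => ℓ (m + M0)) := (summable_nat_add_iff M0).mpr hℓsum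
    have hb2shift : Summable (fun m => b2 (m + M0)) := (summable_nat_add_iff M0).mpr hb2sum
    have hbound : ∀ m : ℕ, fA (m + M0) ≤ 2^k * ℓ (m + M0) + b2 (m + M0) := fun m => by
      simpa only [hfA, hℓ, hb2] using bound_am k d hkd (m + M0) hq0 hqlt1
    have hAtail : ∑' m, fA (m + M0)
        ≤ 2^k * ∑' m, ℓ (m + M0) + ∑' m, b2 (m + M0) := by
      calc ∑' m, fA (m + M0) ≤ ∑' m, (2^k * ℓ (m + M0) + b2 (m + M0)) :=
            Summable.tsum_le_tsum hbound hAshift ((hLshift.mul_left (2^k)).add hb2shift)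
        _ = (∑' m, 2^k * ℓ (m + M0)) + ∑' m, b2 (m + M0) :=
            Summable.tsum_add (hLshift.mul_left (2^k)) hb2shift
        _ = 2^k * (∑' m, ℓ (m + M0)) + ∑' m, b2 (m + M0) := by rw [tsum_mul_left]
    have hb2tail : ∑' m, b2 (m + M0) ≤ C * (1 - q) := by
      have h4 := Summable.sum_add_tsum_nat_add M0 hb2sum
      have h5 : 0 ≤ ∑ m ∈ Finset.range M0, b2 m := Finset.sum_nonneg fun m _ => hb20 m
      have h6 : ∑' m, b2 m ≤ C * (1-q) := by
        calc ∑' m, b2 m ≤ 3^k * (d.factorial : ℝ) * (1-q) := hb2le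
          _ = C * (1-q) := by rw [hC]
      linarith
    have hLtail0 : 0 ≤ ∑' m, ℓ (m + M0) := tsum_nonneg fun m => hℓ0 _
    have hAtail0 : 0 ≤ ∑' m, fA (m + M0) := tsum_nonneg fun m => hfA0 _
    have hb2tail0 : 0 ≤ ∑' m, b2 (m + M0) := tsum_nonneg fun m => hb20 _
    have hM0' : ((2:ℝ)^k + 1) * ∑' m, ℓ (m + M0) < ε/3 := by
      rwa [tsum_mul_left] at hM0
    have hCq : C * (1 - q) < ε/3 := by
      have h7 : 1 - q < ε/(3*(C+1)) := hq2
      have h8 : C * (1-q) ≤ C * (ε/(3*(C+1))) := by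
        apply mul_le_mul_of_nonneg_left (le_of_lt h7) hC0
      have h9 : C * (ε/(3*(C+1))) < ε/3 := by
        rw [mul_div_assoc']
        rw [div_lt_div_iff₀ (by linarith : (0:ℝ) < 3*(C+1)) (by norm_num : (0:ℝ) < 3)]
        nlinarith
      linarith
    rw [Real.dist_eq]
    rw [Real.dist_eq] at hq1
    have habs : |∑' m, fA m - ∑' m, ℓ m|
        ≤ |∑ m ∈ Finset.range M0, fA m - ∑ m ∈ Finset.range M0, ℓ m|
          + (∑' m, fA (m + M0)) + (∑' m, ℓ (m + M0)) := by
      rw [← hsplitA, ← hsplitL]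
      have h10 : ∑ m ∈ Finset.range M0, fA m + ∑' m, fA (m + M0)
          - (∑ m ∈ Finset.range M0, ℓ m + ∑' m, ℓ (m + M0))
          = (∑ m ∈ Finset.range M0, fA m - ∑ m ∈ Finset.range M0, ℓ m)
            + (∑' m, fA (m + M0) - ∑' m, ℓ (m + M0)) := by ring
      rw [h10]
      calc |(∑ m ∈ Finset.range M0, fA m - ∑ m ∈ Finset.range M0, ℓ m)
            + (∑' m, fA (m + M0) - ∑' m, ℓ (m + M0))|
          ≤ |∑ m ∈ Finset.range M0, fA m - ∑ m ∈ Finset.range M0, ℓ m|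
            + |∑' m, fA (m + M0) - ∑' m, ℓ (m + M0)| := abs_add_le _ _
        _ ≤ |∑ m ∈ Finset.range M0, fA m - ∑ m ∈ Finset.range M0, ℓ m|
            + ((∑' m, fA (m + M0)) + (∑' m, ℓ (m + M0))) := by
              have := abs_sub (∑' m, fA (m + M0)) (∑' m, ℓ (m + M0))
              have h11 : |∑' m, fA (m + M0) - ∑' m, ℓ (m + M0)|
                  ≤ (∑' m, fA (m + M0)) + (∑' m, ℓ (m + M0)) := by
                rw [abs_sub_le_iff]
                constructor <;> nlinarith
              linarith
        _ = _ := by ring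
    have hfinal : |∑' m, fA m - ∑' m, ℓ m| < ε := by
      have h12 : (∑' m, fA (m + M0)) ≤ 2^k * ∑' m, ℓ (m + M0) + C * (1-q) := by
        linarith
      have h13 : 2^k * (∑' m, ℓ (m + M0)) + (∑' m, ℓ (m + M0))
          = ((2:ℝ)^k + 1) * ∑' m, ℓ (m + M0) := by ring
      calc |∑' m, fA m - ∑' m, ℓ m|
          ≤ |∑ m ∈ Finset.range M0, fA m - ∑ m ∈ Finset.range M0, ℓ m|
            + (∑' m, fA (m + M0)) + (∑' m, ℓ (m + M0)) := habs
        _ < ε/3 + (2^k * ∑' m, ℓ (m + M0) + C * (1-q)) + (∑' m, ℓ (m + M0)) := by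
            have := hq1
            nlinarith [hLtail0]
        _ = ε/3 + C * (1-q) + ((2:ℝ)^k + 1) * ∑' m, ℓ (m + M0) := by ring
        _ < ε/3 + ε/3 + ε/3 := by linarith
        _ = ε := by ring
    exact hfinal
  refine Tendsto.congr' ?_ key
  filter_upwards [self_mem_nhdsWithin] with q hq
  exact ((per_q k d hkd hq.1 hq.2).2).symm
end

section
/- In the quasi-shuffle algebra (ℌ¹, *) on letters z_k (k ≥ 1) with z_{k₁} ◊ z_{k₂} = z_{k₁+k₂}, the identity Σ_{j=−n}^{n} (−1)^j z_2^{n−j} ⧢ z_2^{n+j} = 4^n (z_3 z_1)^n holds in the shuffle algebra (ℌ, ⧢) for all n ≥ 1, where z_k = x^{k−1}y in ℚ⟨x,y⟩ and ⧢ is the shuffle product. -/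
/-- The shuffles of two words, as a multiset (recording multiplicities):
`1 ⧢ w = w`, `aw ⧢ bv = a(w ⧢ bv) + b(aw ⧢ v)`. -/
def shuffles : List Bool → List Bool → Multiset (List Bool)
  | [], v => {v}
  | w, [] => {w}
  | a :: w, b :: v =>
      (shuffles w (b :: v)).map (a :: ·) + (shuffles (a :: w) v).map (b :: ·)
termination_by w v => w.length + v.length

/-- The `m`-fold concatenation power of a word. -/
def wordPow (w : List Bool) (m : ℕ) : List Bool :=
  (List.replicate m w).flatten

/-- The letters `x`, `y` of `ℚ⟨x,y⟩` and the words `z₂ = xy`, `z₃z₁ = x x y y`. -/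
def z2 : List Bool := [true, false]

def z31 : List Bool := [true, true, false, false]

lemma shuffles_nil_left (v : List Bool) : shuffles [] v = {v} := by rw [shuffles]
lemma shuffles_nil_right (a : Bool) (u : List Bool) : shuffles (a::u) [] = {a::u} := by rw [shuffles]; simp
lemma shuffles_cons_cons (a b : Bool) (u v : List Bool) : shuffles (a::u) (b::v) =
  (shuffles u (b :: v)).map (a :: ·) + (shuffles (a :: u) v).map (b :: ·) := by rw [shuffles]

lemma length_of_mem_shuffles : ∀ (u v l : List Bool), l ∈ shuffles u v → l.length = u.length + v.length := by
  intro u v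
  induction u, v using shuffles.induct with
  | case1 v => intro l hl; rw [shuffles_nil_left] at hl; simp at hl; simp [hl]
  | case2 w h => intro l hl
                 match w, h with
                 | a::w, _ => rw [shuffles_nil_right] at hl; simp at hl; simp [hl]
  | case3 a w b v ih1 ih2 =>
      intro l hl
      rw [shuffles_cons_cons] at hl
      simp only [Multiset.mem_add, Multiset.mem_map] at hl
      rcases hl with ⟨l', hl', rfl⟩ | ⟨l', hl', rfl⟩
      · have := ih1 l' hl'; simp [this]; omega
      · have := ih2 l' hl'; simp [this]; omega

open Finset Complex

noncomputable def cnt (u v w : List Bool) : ℂ := ((shuffles u v).count w : ℂ)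

lemma cnt_eq_zero {u v w : List Bool} (h : w.length ≠ u.length + v.length) : cnt u v w = 0 := by
  unfold cnt
  rw [Multiset.count_eq_zero_of_notMem]
  · simp
  · intro hmem; exact h (length_of_mem_shuffles u v w hmem)

lemma cnt_nil_left (v w : List Bool) : cnt [] v w = if w = v then 1 else 0 := by
  unfold cnt; rw [shuffles_nil_left, Multiset.count_singleton]; split_ifs <;> simp

lemma cnt_nil_right (u w : List Bool) : cnt u [] w = if w = u then 1 else 0 := by
  cases u with
  | nil => exact cnt_nil_left [] w
  | cons a u => unfold cnt; rw [shuffles_nil_right, Multiset.count_singleton]; split_ifs <;> simp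

lemma count_map_cons (a : Bool) (s : Multiset (List Bool)) (b : Bool) (w : List Bool) :
    Multiset.count (b :: w) (s.map (a :: ·)) = if a = b then s.count w else 0 := by
  split_ifs with h
  · subst h; exact Multiset.count_map_eq_count' _ s (fun l1 l2 h => by simpa using h) w
  · rw [Multiset.count_eq_zero]
    intro hmem
    rcases Multiset.mem_map.1 hmem with ⟨l, _, hl⟩
    exact h (by injection hl)

lemma count_map_nil (a : Bool) (s : Multiset (List Bool)) :
    Multiset.count [] (s.map (a :: ·)) = 0 := by
  rw [Multiset.count_eq_zero]
  intro hmem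
  rcases Multiset.mem_map.1 hmem with ⟨l, _, hl⟩
  exact List.cons_ne_nil _ _ hl

lemma cnt_cons_cons (a b c : Bool) (u v w : List Bool) :
    cnt (a::u) (b::v) (c::w) =
      (if a = c then cnt u (b::v) w else 0) + (if b = c then cnt (a::u) v w else 0) := by
  unfold cnt
  rw [shuffles_cons_cons, Multiset.count_add, count_map_cons, count_map_cons]
  split_ifs <;> push_cast <;> ring

lemma cnt_cons_cons_nil (a b : Bool) (u v : List Bool) : cnt (a::u) (b::v) [] = 0 := by
  unfold cnt
  rw [shuffles_cons_cons, Multiset.count_add, count_map_nil, count_map_nil]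
  simp

def zw (m : ℕ) : List Bool := wordPow z2 m
def yw (m : ℕ) : List Bool := false :: zw m

lemma zw_zero : zw 0 = [] := rfl
lemma zw_succ (m : ℕ) : zw (m+1) = true :: false :: zw m := rfl

lemma zw_length (m : ℕ) : (zw m).length = 2*m := by
  induction m with
  | zero => rfl
  | succ m ih => rw [zw_succ]; simp [ih]; omega

lemma yw_length (m : ℕ) : (yw m).length = 2*m+1 := by simp [yw, zw_length]

noncomputable def SS (p q : ℕ → List Bool) (R1 R2 : ℕ) (w : List Bool) : ℂ :=
  ∑ m ∈ Finset.range R1, ∑ k ∈ Finset.range R2, (-I)^m * I^k * cnt (p m) (q k) w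

lemma SS_stab {p q : ℕ → List Bool} (hp : ∀ m, m ≤ (p m).length) (hq : ∀ k, k ≤ (q k).length)
    {w : List Bool} {R1 R2 R1' R2' : ℕ}
    (h1 : w.length < R1) (h1' : R1 ≤ R1') (h2 : w.length < R2) (h2' : R2 ≤ R2') :
    SS p q R1' R2' w = SS p q R1 R2 w := by
  unfold SS
  rw [← Finset.sum_subset (Finset.range_subset_range.2 h1')]
  · apply Finset.sum_congr rfl
    intro m hm
    rw [← Finset.sum_subset (Finset.range_subset_range.2 h2')]
    intro k hk hk'
    simp only [Finset.mem_range, not_lt] at hk'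
    have hz : cnt (p m) (q k) w = 0 := cnt_eq_zero (by have := hq k; omega)
    rw [hz, mul_zero]
  · intro m hm hm'
    simp only [Finset.mem_range, not_lt] at hm'
    apply Finset.sum_eq_zero
    intro k hk
    have hz : cnt (p m) (q k) w = 0 := cnt_eq_zero (by have := hp m; omega)
    rw [hz, mul_zero]

lemma zw_good : ∀ m, m ≤ (zw m).length := fun m => by rw [zw_length]; omega
lemma yw_good : ∀ m, m ≤ (yw m).length := fun m => by rw [yw_length]; omega

noncomputable def Aw (w : List Bool) : ℂ := SS zw zw (w.length+1) (w.length+1) w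
noncomputable def Bw (w : List Bool) : ℂ := SS yw zw (w.length+1) (w.length+1) w
noncomputable def Cw (w : List Bool) : ℂ := SS zw yw (w.length+1) (w.length+1) w
noncomputable def Dw (w : List Bool) : ℂ := SS yw yw (w.length+1) (w.length+1) w

lemma zw_ne_consf (k : ℕ) (w : List Bool) : zw k ≠ false :: w := by
  cases k with
  | zero => simp [zw_zero]
  | succ k => rw [zw_succ]; simp

lemma Aw_nil : Aw [] = 1 := by
  simp [Aw, SS, zw_zero, cnt_nil_left]

lemma Bw_nil : Bw [] = 0 := by
  simp [Bw, SS, yw, zw_zero, cnt_nil_right]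

lemma yw_def (m : ℕ) : yw m = false :: zw m := rfl

lemma Cw_nil : Cw [] = 0 := by
  simp [Cw, SS, yw, cnt_nil_left, zw_zero]

lemma Dw_nil : Dw [] = 0 := by
  simp [Dw, SS, yw, cnt_cons_cons_nil]

lemma Aw_consf (w : List Bool) : Aw (false :: w) = 0 := by
  unfold Aw SS
  apply Finset.sum_eq_zero; intro m _
  apply Finset.sum_eq_zero; intro k _
  have hz : cnt (zw m) (zw k) (false :: w) = 0 := by
    cases m with
    | zero => rw [zw_zero, cnt_nil_left, if_neg]; exact fun h => zw_ne_consf k w h.symm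
    | succ m => cases k with
      | zero => rw [zw_zero, cnt_nil_right, if_neg]; exact fun h => zw_ne_consf (m+1) w h.symm
      | succ k => rw [zw_succ, zw_succ, cnt_cons_cons]; simp
  rw [hz, mul_zero]

lemma Dw_const (w : List Bool) : Dw (true :: w) = 0 := by
  unfold Dw SS
  apply Finset.sum_eq_zero; intro m _
  apply Finset.sum_eq_zero; intro k _
  have hz : cnt (yw m) (yw k) (true :: w) = 0 := by
    unfold yw; rw [cnt_cons_cons]; simp
  rw [hz, mul_zero]

lemma Bw_consf (w : List Bool) : Bw (false :: w) = Aw w := by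
  unfold Bw Aw
  have h1 : SS yw zw (w.length+1+1) (w.length+1+1) (false :: w)
      = SS zw zw (w.length+1+1) (w.length+1+1) w := by
    unfold SS
    apply Finset.sum_congr rfl; intro m _
    apply Finset.sum_congr rfl; intro k _
    congr 1
    cases k with
    | zero => rw [zw_zero, cnt_nil_right, cnt_nil_right, yw]; simp
    | succ k => rw [zw_succ, yw, cnt_cons_cons]; simp [← zw_succ]
  rw [show (false :: w).length = w.length + 1 by simp, h1]
  exact SS_stab zw_good zw_good (by omega) (by omega) (by omega) (by omega)

lemma Cw_consf (w : List Bool) : Cw (false :: w) = Aw w := by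
  unfold Cw Aw
  have h1 : SS zw yw (w.length+1+1) (w.length+1+1) (false :: w)
      = SS zw zw (w.length+1+1) (w.length+1+1) w := by
    unfold SS
    apply Finset.sum_congr rfl; intro m _
    apply Finset.sum_congr rfl; intro k _
    congr 1
    cases m with
    | zero => rw [zw_zero, cnt_nil_left, cnt_nil_left, yw]; simp
    | succ m => rw [zw_succ, yw, cnt_cons_cons]; simp [← zw_succ]
  rw [show (false :: w).length = w.length + 1 by simp, h1]
  exact SS_stab zw_good zw_good (by omega) (by omega) (by omega) (by omega)

lemma Dw_consf (w : List Bool) : Dw (false :: w) = Bw w + Cw w := by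
  unfold Dw Bw Cw
  have h1 : SS yw yw (w.length+1+1) (w.length+1+1) (false :: w)
      = SS yw zw (w.length+1+1) (w.length+1+1) w
        + SS zw yw (w.length+1+1) (w.length+1+1) w := by
    unfold SS
    rw [← Finset.sum_add_distrib]
    apply Finset.sum_congr rfl; intro m _
    rw [← Finset.sum_add_distrib]
    apply Finset.sum_congr rfl; intro k _
    have : cnt (yw m) (yw k) (false :: w) = cnt (zw m) (yw k) w + cnt (yw m) (zw k) w := by
      unfold yw; rw [cnt_cons_cons]; simp [← yw_def]
    rw [this]; ring
  rw [show (false :: w).length = w.length + 1 by simp, h1,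
    SS_stab (R1 := w.length+1) (R2 := w.length+1) yw_good zw_good (by omega) (by omega) (by omega) (by omega),
    SS_stab (R1 := w.length+1) (R2 := w.length+1) zw_good yw_good (by omega) (by omega) (by omega) (by omega)]

lemma Bw_const (w : List Bool) : Bw (true :: w) = I * Dw w := by
  unfold Bw Dw
  rw [show (true::w).length = w.length+1 by simp]
  have key : SS yw zw (w.length+1+1) (w.length+1+1) (true::w)
      = I * SS yw yw (w.length+1+1) (w.length+1) w := by
    unfold SS
    rw [Finset.mul_sum]
    apply Finset.sum_congr rfl; intro m _
    rw [Finset.sum_range_succ' (fun k => (-I)^m * I^k * cnt (yw m) (zw k) (true::w)) (w.length+1)]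
    have h0 : (-I)^m * I^(0:ℕ) * cnt (yw m) (zw 0) (true::w) = 0 := by
      rw [zw_zero, cnt_nil_right, if_neg (by simp [yw_def])]; ring
    rw [h0, add_zero, Finset.mul_sum]
    apply Finset.sum_congr rfl; intro k _
    rw [zw_succ, yw_def, cnt_cons_cons]
    simp only [Bool.false_eq_true, if_false, if_true, zero_add, ← yw_def]
    rw [pow_succ]
    ring
  rw [key, SS_stab (R1 := w.length+1) (R2 := w.length+1) yw_good yw_good
    (by omega) (by omega) (by omega) (by omega)]

lemma Cw_const (w : List Bool) : Cw (true :: w) = (-I) * Dw w := by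
  unfold Cw Dw
  rw [show (true::w).length = w.length+1 by simp]
  have key : SS zw yw (w.length+1+1) (w.length+1+1) (true::w)
      = (-I) * SS yw yw (w.length+1) (w.length+1+1) w := by
    unfold SS
    rw [Finset.sum_range_succ' (fun m => ∑ k ∈ Finset.range (w.length+1+1),
      (-I)^m * I^k * cnt (zw m) (yw k) (true::w)) (w.length+1)]
    have h0 : (∑ k ∈ Finset.range (w.length+1+1),
        (-I)^(0:ℕ) * I^k * cnt (zw 0) (yw k) (true::w)) = 0 := by
      apply Finset.sum_eq_zero; intro k _
      rw [zw_zero, cnt_nil_left, if_neg (by simp [yw_def])]; ring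
    rw [h0, add_zero, Finset.mul_sum]
    apply Finset.sum_congr rfl; intro m _
    rw [Finset.mul_sum]
    apply Finset.sum_congr rfl; intro k _
    rw [zw_succ, yw_def, cnt_cons_cons]
    simp only [Bool.false_eq_true, if_false, if_true, add_zero, ← yw_def]
    rw [pow_succ]
    ring
  rw [key, SS_stab (R1 := w.length+1) (R2 := w.length+1) yw_good yw_good
    (by omega) (by omega) (by omega) (by omega)]

lemma Aw_const (w : List Bool) : Aw (true :: w) = (-I) * Bw w + I * Cw w := by
  unfold Aw Bw Cw SS
  rw [show (true::w).length = w.length+1 by simp]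
  set L := w.length with hL
  set e : ℕ → ℂ := fun m => if w = yw m then (1:ℂ) else 0 with he
  -- boundary values
  have hg0 : ∀ k, (-I)^(0:ℕ) * I^(k+1) * cnt (zw 0) (zw (k+1)) (true::w) = I^(k+1) * e k := by
    intro k
    rw [zw_zero, cnt_nil_left, zw_succ, he]
    simp only [List.cons.injEq, true_and, pow_zero, one_mul, ← yw_def]
  have hg0' : (-I)^(0:ℕ) * I^(0:ℕ) * cnt (zw 0) (zw 0) (true::w) = 0 := by
    rw [zw_zero, cnt_nil_left, if_neg (by simp)]; ring
  have hgm0 : ∀ m, (-I)^(m+1) * I^(0:ℕ) * cnt (zw (m+1)) (zw 0) (true::w)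
      = (-I)^(m+1) * e m := by
    intro m
    rw [zw_zero, cnt_nil_right, zw_succ, he]
    simp only [List.cons.injEq, true_and, pow_zero, mul_one, ← yw_def]
  have hsplit : ∀ m k, cnt (zw (m+1)) (zw (k+1)) (true::w)
      = cnt (yw m) (zw (k+1)) w + cnt (zw (m+1)) (yw k) w := by
    intro m k
    rw [zw_succ m, zw_succ k, cnt_cons_cons]
    simp only [if_true, ← zw_succ, ← yw_def]
  -- the two key partial sums
  have key1 : ∀ m, (∑ k ∈ Finset.range (L+1), (-I)^(m+1) * I^(k+1) * cnt (yw m) (zw (k+1)) w)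
      + (-I)^(m+1) * e m
      = (-I) * ∑ k ∈ Finset.range (L+1), (-I)^m * I^k * cnt (yw m) (zw k) w := by
    intro m
    have expand := Finset.sum_range_succ' (fun k => (-I)^(m+1) * I^k * cnt (yw m) (zw k) w) (L+1)
    have htop := Finset.sum_range_succ (fun k => (-I)^(m+1) * I^k * cnt (yw m) (zw k) w) (L+1)
    have hzero : (-I)^(m+1) * I^(L+1) * cnt (yw m) (zw (L+1)) w = 0 := by
      rw [cnt_eq_zero (by rw [yw_length, zw_length]; omega)]; ring
    have h0 : (-I)^(m+1) * I^(0:ℕ) * cnt (yw m) (zw 0) w = (-I)^(m+1) * e m := by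
      rw [zw_zero, cnt_nil_right, he]; simp
    rw [← h0, ← expand, htop, hzero, add_zero, Finset.mul_sum]
    apply Finset.sum_congr rfl; intro k _
    rw [pow_succ]; ring
  have key2 : ∀ k, (∑ m ∈ Finset.range (L+1), (-I)^(m+1) * I^(k+1) * cnt (zw (m+1)) (yw k) w)
      + I^(k+1) * e k
      = I * ∑ m ∈ Finset.range (L+1), (-I)^m * I^k * cnt (zw m) (yw k) w := by
    intro k
    have expand := Finset.sum_range_succ' (fun m => (-I)^m * I^(k+1) * cnt (zw m) (yw k) w) (L+1)
    have htop := Finset.sum_range_succ (fun m => (-I)^m * I^(k+1) * cnt (zw m) (yw k) w) (L+1)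
    have hzero : (-I)^(L+1) * I^(k+1) * cnt (zw (L+1)) (yw k) w = 0 := by
      rw [cnt_eq_zero (by rw [yw_length, zw_length]; omega)]; ring
    have h0 : (-I)^(0:ℕ) * I^(k+1) * cnt (zw 0) (yw k) w = I^(k+1) * e k := by
      rw [zw_zero, cnt_nil_left, he]; simp
    rw [← h0, ← expand, htop, hzero, add_zero, Finset.mul_sum]
    apply Finset.sum_congr rfl; intro m _
    rw [pow_succ]; ring
  -- now assemble
  rw [Finset.sum_range_succ' (fun m => ∑ k ∈ Finset.range (L+1+1),
      (-I)^m * I^k * cnt (zw m) (zw k) (true::w)) (L+1)]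
  rw [Finset.sum_range_succ' (fun k => (-I)^(0:ℕ) * I^k * cnt (zw 0) (zw k) (true::w)) (L+1)]
  rw [hg0', add_zero]
  have hinner : ∀ m, (∑ k ∈ Finset.range (L+1+1), (-I)^(m+1) * I^k * cnt (zw (m+1)) (zw k) (true::w))
      = ((∑ k ∈ Finset.range (L+1), (-I)^(m+1) * I^(k+1) * cnt (yw m) (zw (k+1)) w)
          + (-I)^(m+1) * e m)
        + (∑ k ∈ Finset.range (L+1), (-I)^(m+1) * I^(k+1) * cnt (zw (m+1)) (yw k) w) := by
    intro m
    rw [Finset.sum_range_succ' (fun k => (-I)^(m+1) * I^k * cnt (zw (m+1)) (zw k) (true::w)) (L+1),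
      hgm0 m]
    have : ∀ k, (-I)^(m+1) * I^(k+1) * cnt (zw (m+1)) (zw (k+1)) (true::w)
        = (-I)^(m+1) * I^(k+1) * cnt (yw m) (zw (k+1)) w
          + (-I)^(m+1) * I^(k+1) * cnt (zw (m+1)) (yw k) w := by
      intro k; rw [hsplit]; ring
    rw [Finset.sum_congr rfl (fun k _ => this k), Finset.sum_add_distrib]
    ring
  rw [Finset.sum_congr rfl (fun m _ => hinner m),
    Finset.sum_congr rfl (fun k _ => hg0 k),
    Finset.sum_add_distrib, add_assoc]
  congr 1
  · rw [Finset.sum_congr rfl (fun m _ => key1 m), ← Finset.mul_sum]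
  · rw [Finset.sum_comm, ← Finset.sum_add_distrib,
      Finset.sum_congr rfl (fun k _ => key2 k), ← Finset.mul_sum]
    congr 1
    exact Finset.sum_comm

def rep (n : ℕ) : List Bool := wordPow z31 n

lemma rep_zero : rep 0 = [] := rfl
lemma rep_succ (n : ℕ) : rep (n+1) = true::true::false::false::rep n := rfl

lemma rep_length (n : ℕ) : (rep n).length = 4*n := by
  induction n with
  | zero => rfl
  | succ n ih => rw [rep_succ]; simp [ih]; omega

lemma f_ne_rep (w : List Bool) (q : ℕ) : (false :: w) ≠ rep q := by
  cases q <;> simp [rep_zero, rep_succ]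
lemma t_nil_ne_rep (q : ℕ) : ([true] : List Bool) ≠ rep q := by
  cases q <;> simp [rep_zero, rep_succ]
lemma tf_ne_rep (w : List Bool) (q : ℕ) : (true::false::w) ≠ rep q := by
  cases q <;> simp [rep_zero, rep_succ]
lemma tt_nil_ne_rep (q : ℕ) : ([true, true] : List Bool) ≠ rep q := by
  cases q <;> simp [rep_zero, rep_succ]
lemma ttt_ne_rep (w : List Bool) (q : ℕ) : (true::true::true::w) ≠ rep q := by
  cases q <;> simp [rep_zero, rep_succ]
lemma ttf_nil_ne_rep (q : ℕ) : ([true, true, false] : List Bool) ≠ rep q := by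
  cases q <;> simp [rep_zero, rep_succ]
lemma ttft_ne_rep (w : List Bool) (q : ℕ) : (true::true::false::true::w) ≠ rep q := by
  cases q <;> simp [rep_zero, rep_succ]

lemma Aw_closed : ∀ (N : ℕ) (w : List Bool), w.length ≤ N →
    Aw w = if w = rep (w.length/4) then (4:ℂ)^(w.length/4) else 0 := by
  intro N
  induction N with
  | zero =>
    intro w hw
    have : w = [] := List.length_eq_zero_iff.1 (Nat.le_zero.1 hw)
    subst this
    simp [Aw_nil, rep_zero]
  | succ N ih =>
    intro w hw
    rcases w with _ | ⟨b1, w⟩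
    · simp [Aw_nil, rep_zero]
    cases b1
    · rw [Aw_consf, if_neg (f_ne_rep _ _)]
    rcases w with _ | ⟨b2, w⟩
    · rw [Aw_const, Bw_nil, Cw_nil, if_neg (t_nil_ne_rep _)]; ring
    cases b2
    · rw [Aw_const, Bw_consf, Cw_consf, if_neg (tf_ne_rep _ _)]; ring
    rcases w with _ | ⟨b3, w⟩
    · rw [Aw_const, Bw_const, Cw_const, Dw_nil, if_neg (tt_nil_ne_rep _)]; ring
    cases b3
    case true =>
      rw [Aw_const, Bw_const, Cw_const, Dw_const, if_neg (ttt_ne_rep _ _)]; ring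
    rcases w with _ | ⟨b4, w⟩
    · rw [Aw_const, Bw_const, Cw_const, Dw_consf, Bw_nil, Cw_nil,
        if_neg (ttf_nil_ne_rep _)]; ring
    cases b4
    case true =>
      rw [Aw_const, Bw_const, Cw_const, Dw_consf, Bw_const, Cw_const,
        if_neg (ttft_ne_rep _ _)]; ring
    have hlen : w.length ≤ N := by simp at hw; omega
    rw [Aw_const, Bw_const, Cw_const, Dw_consf, Bw_consf, Cw_consf, ih w hlen]
    have h4 : (true::true::false::false::w).length / 4 = w.length/4 + 1 := by
      simp; omega
    rw [h4, rep_succ]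
    simp only [List.cons.injEq, true_and]
    split_ifs
    · rw [pow_succ]; ring_nf; rw [Complex.I_sq]; ring
    · ring

lemma neg_one_pow_congr' {a b : ℕ} (h : a % 2 = b % 2) : (-1:ℂ)^a = (-1:ℂ)^b := by
  rw [← Nat.div_add_mod a 2, ← Nat.div_add_mod b 2, pow_add, pow_add,
    pow_mul, pow_mul, neg_one_sq, one_pow, one_pow, h]

/-- The word-level shuffle identity behind the 3-1-formula:
`Σ_{j=-n}^{n} (-1)^j z₂^{n-j} ⧢ z₂^{n+j} = 4^n (z₃z₁)^n` in `(ℚ⟨x,y⟩, ⧢)`,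
stated coefficientwise on each word `w`. -/
theorem three_one_shuffle_identity (n : ℕ) (hn : 1 ≤ n) (w : List Bool) :
    (∑ j ∈ Finset.Icc (-(n : ℤ)) n,
        (-1 : ℤ) ^ j.natAbs *
          ((shuffles (wordPow z2 (n - j).toNat) (wordPow z2 (n + j).toNat)).count w : ℤ)) =
      if w = wordPow z31 n then (4 : ℤ) ^ n else 0 := by
  by_cases hlen : w.length = 4*n
  · -- main case: go to ℂ
    have hA1 : Aw w = if w = rep n then (4:ℂ)^n else 0 := by
      have := Aw_closed w.length w le_rfl
      rw [hlen] at this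
      rw [this, Nat.mul_div_cancel_left n (by norm_num : 0 < 4)]
    have hA2 : Aw w = ∑ m ∈ Finset.range (2*n+1),
        (-1:ℂ)^(m+n) * cnt (zw m) (zw (2*n-m)) w := by
      unfold Aw SS
      rw [hlen]
      have hin : ∀ m ∈ Finset.range (2*n+1),
          (∑ k ∈ Finset.range (4*n+1), (-I)^m * I^k * cnt (zw m) (zw k) w)
            = (-1:ℂ)^(m+n) * cnt (zw m) (zw (2*n-m)) w := by
        intro m hm
        rw [Finset.mem_range] at hm
        rw [Finset.sum_eq_single (2*n-m)]
        · congr 1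
          rw [neg_pow, mul_assoc, ← pow_add,
            show m + (2*n-m) = 2*n by omega, pow_mul, Complex.I_sq]
          ring
        · intro k _ hk
          rw [cnt_eq_zero (by rw [zw_length, zw_length]; omega)]; ring
        · intro h
          exact absurd (Finset.mem_range.2 (by omega)) h
      rw [← Finset.sum_subset (Finset.range_subset_range.2 (by omega : 2*n+1 ≤ 4*n+1))]
      · exact Finset.sum_congr rfl hin
      · intro m _ hm
        rw [Finset.mem_range, not_lt] at hm
        apply Finset.sum_eq_zero
        intro k _
        rw [cnt_eq_zero (by rw [zw_length, zw_length]; omega)]; ring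
    have hBij : ((∑ j ∈ Finset.Icc (-(n : ℤ)) n,
        (-1 : ℤ) ^ j.natAbs *
          ((shuffles (wordPow z2 (n - j).toNat) (wordPow z2 (n + j).toNat)).count w : ℤ) : ℤ) : ℂ)
        = ∑ m ∈ Finset.range (2*n+1), (-1:ℂ)^(m+n) * cnt (zw m) (zw (2*n-m)) w := by
      push_cast
      refine Finset.sum_nbij' (fun j => ((n:ℤ) - j).toNat) (fun m => (n:ℤ) - m)
        ?_ ?_ ?_ ?_ ?_
      · intro j hj
        rw [Finset.mem_Icc] at hj
        rw [Finset.mem_range]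
        omega
      · intro m hm
        rw [Finset.mem_range] at hm
        rw [Finset.mem_Icc]
        omega
      · intro j hj
        rw [Finset.mem_Icc] at hj
        omega
      · intro m hm
        rw [Finset.mem_range] at hm
        omega
      · intro j hj
        rw [Finset.mem_Icc] at hj
        have h1 : (n + j).toNat = 2*n - ((n:ℤ) - j).toNat := by omega
        have h2 : ((-1:ℂ))^j.natAbs = (-1:ℂ)^(((n:ℤ) - j).toNat + n) := by
          apply neg_one_pow_congr'
          omega
        rw [h1, h2]
        rfl
    have hfin : ((∑ j ∈ Finset.Icc (-(n : ℤ)) n,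
        (-1 : ℤ) ^ j.natAbs *
          ((shuffles (wordPow z2 (n - j).toNat) (wordPow z2 (n + j).toNat)).count w : ℤ) : ℤ) : ℂ)
        = ((if w = wordPow z31 n then (4 : ℤ) ^ n else 0 : ℤ) : ℂ) := by
      rw [hBij, ← hA2, hA1]
      simp only [apply_ite (fun z : ℤ => (z : ℂ))]
      push_cast
      rfl
    exact_mod_cast hfin
  · -- degenerate case: lengths don't match
    rw [if_neg (by intro h; apply hlen; rw [h]; exact rep_length n)]
    apply Finset.sum_eq_zero
    intro j hj
    rw [Finset.mem_Icc] at hj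
    have hz : (shuffles (wordPow z2 (n - j).toNat) (wordPow z2 (n + j).toNat)).count w = 0 := by
      apply Multiset.count_eq_zero_of_notMem
      intro hmem
      have hl := length_of_mem_shuffles _ _ _ hmem
      rw [show wordPow z2 ((n:ℤ) - j).toNat = zw (((n:ℤ) - j).toNat) from rfl,
        show wordPow z2 ((n:ℤ) + j).toNat = zw (((n:ℤ) + j).toNat) from rfl,
        zw_length, zw_length] at hl
      omega
    rw [hz]
    simp
end

section
/- The quasi-shuffle product on ℚ⟨A⟩ defined by 1 * w = w * 1 = w and aw * bv = a(w*bv) + b(aw*v) + (a◊b)(w*v), for any commutative (possibly non-unital) product ◊ on the ℚ-span of the alphabet A, is commutative and associative. -/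
/-- The bilinear extension to `ℚA` of a product `◊ : A → A → ℚA` on letters. -/
noncomputable def diamondL {A : Type*} (d : A → A → (A →₀ ℚ)) (f g : A →₀ ℚ) : A →₀ ℚ :=
  f.sum fun a x => g.sum fun b y => (x * y) • d a b

/-- Hoffman's quasi-shuffle product of two words, with values in `ℚ⟨A⟩` (realized as
finitely supported functions on words): `1 * w = w * 1 = w` and
`aw * bv = a(w*bv) + b(aw*v) + (a◊b)(w*v)`. -/
noncomputable def qsh {A : Type*} (d : A → A → (A →₀ ℚ)) :
    List A → List A → (List A →₀ ℚ)
  | [], v => Finsupp.single v 1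
  | w, [] => Finsupp.single w 1
  | a :: w, b :: v =>
      (qsh d w (b :: v)).mapDomain (a :: ·) + (qsh d (a :: w) v).mapDomain (b :: ·) +
        (d a b).sum fun c x => x • (qsh d w v).mapDomain (c :: ·)
termination_by w v => w.length + v.length

/-- The bilinear extension of the quasi-shuffle product to `ℚ⟨A⟩`. -/
noncomputable def qshL {A : Type*} (d : A → A → (A →₀ ℚ)) (f g : List A →₀ ℚ) :
    List A →₀ ℚ :=
  f.sum fun w x => g.sum fun v y => (x * y) • qsh d w v

section QuasiShuffleAux

variable {A : Type*} (d : A → A → (A →₀ ℚ))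

lemma qsh_nil_left (v : List A) : qsh d [] v = Finsupp.single v 1 := by rw [qsh]
lemma qsh_nil_right (w : List A) : qsh d w [] = Finsupp.single w 1 := by
  cases w <;> simp [qsh]
lemma qsh_cons_cons (a b : A) (w v : List A) :
    qsh d (a :: w) (b :: v) =
      (qsh d w (b :: v)).mapDomain (a :: ·) + (qsh d (a :: w) v).mapDomain (b :: ·) +
        (d a b).sum fun c x => x • (qsh d w v).mapDomain (c :: ·) := by rw [qsh]

/-- `qshL` as a linear map in the left argument. -/
noncomputable def qshLl (g : List A →₀ ℚ) : (List A →₀ ℚ) →ₗ[ℚ] (List A →₀ ℚ) where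
  toFun f := qshL d f g
  map_add' f₁ f₂ := by
    dsimp only [qshL]
    rw [Finsupp.sum_add_index' (fun w => by simp)
      (fun w x₁ x₂ => by simp [add_mul, add_smul, Finsupp.sum_add])]
  map_smul' c f := by
    dsimp only [qshL, RingHom.id_apply]
    rw [Finsupp.sum_smul_index (fun w => by simp), Finsupp.smul_sum]
    refine Finsupp.sum_congr fun w _ => ?_
    rw [Finsupp.smul_sum]
    refine Finsupp.sum_congr fun v _ => ?_
    rw [smul_smul, mul_assoc]

/-- `qshL` as a linear map in the right argument. -/
noncomputable def qshLr (f : List A →₀ ℚ) : (List A →₀ ℚ) →ₗ[ℚ] (List A →₀ ℚ) where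
  toFun g := qshL d f g
  map_add' g₁ g₂ := by
    dsimp only [qshL]
    rw [← Finsupp.sum_add]
    refine Finsupp.sum_congr fun w _ => ?_
    rw [Finsupp.sum_add_index' (fun v => by simp) (fun v y₁ y₂ => by simp [mul_add, add_smul])]
  map_smul' c g := by
    dsimp only [qshL, RingHom.id_apply]
    rw [Finsupp.smul_sum]
    refine Finsupp.sum_congr fun w _ => ?_
    rw [Finsupp.sum_smul_index (fun v => by simp), Finsupp.smul_sum]
    refine Finsupp.sum_congr fun v _ => ?_
    rw [smul_smul, mul_left_comm]

lemma qshL_eq_l (f g : List A →₀ ℚ) : qshL d f g = qshLl d g f := rfl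
lemma qshL_eq_r (f g : List A →₀ ℚ) : qshL d f g = qshLr d f g := rfl

lemma qshL_single_single (w v : List A) (x y : ℚ) :
    qshL d (Finsupp.single w x) (Finsupp.single v y) = (x * y) • qsh d w v := by
  unfold qshL
  rw [Finsupp.sum_single_index (by simp), Finsupp.sum_single_index (by simp)]

@[simp] lemma qshL_zero_left (g : List A →₀ ℚ) : qshL d 0 g = 0 := (qshLl d g).map_zero
@[simp] lemma qshL_zero_right (f : List A →₀ ℚ) : qshL d f 0 = 0 := (qshLr d f).map_zero
lemma qshL_add_left (f₁ f₂ g : List A →₀ ℚ) :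
    qshL d (f₁ + f₂) g = qshL d f₁ g + qshL d f₂ g := (qshLl d g).map_add f₁ f₂
lemma qshL_add_right (f g₁ g₂ : List A →₀ ℚ) :
    qshL d f (g₁ + g₂) = qshL d f g₁ + qshL d f g₂ := (qshLr d f).map_add g₁ g₂
lemma qshL_smul_left (c : ℚ) (f g : List A →₀ ℚ) :
    qshL d (c • f) g = c • qshL d f g := (qshLl d g).map_smul c f
lemma qshL_smul_right (c : ℚ) (f g : List A →₀ ℚ) :
    qshL d f (c • g) = c • qshL d f g := (qshLr d f).map_smul c g

lemma qshL_sum_left {ι M : Type*} [Zero M] (p : ι →₀ M) (F : ι → M → (List A →₀ ℚ))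
    (g : List A →₀ ℚ) : qshL d (p.sum F) g = p.sum fun i r => qshL d (F i r) g :=
  map_finsuppSum (qshLl d g) p F
lemma qshL_sum_right {ι M : Type*} [Zero M] (p : ι →₀ M) (F : ι → M → (List A →₀ ℚ))
    (f : List A →₀ ℚ) : qshL d f (p.sum F) = p.sum fun i r => qshL d f (F i r) :=
  map_finsuppSum (qshLr d f) p F

/-- `h ◊·` prepending operator: `T h X = Σ_c h_c • (c :: ·) X`. -/
noncomputable def T (h : A →₀ ℚ) (X : List A →₀ ℚ) : List A →₀ ℚ :=
  h.sum fun c x => x • X.mapDomain (c :: ·)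

lemma qsh_cons_cons' (a b : A) (w v : List A) :
    qsh d (a :: w) (b :: v) =
      (qsh d w (b :: v)).mapDomain (a :: ·) + (qsh d (a :: w) v).mapDomain (b :: ·) +
        T (d a b) (qsh d w v) := qsh_cons_cons d a b w v

/-- `T h` as a linear map in `X`. -/
noncomputable def Tr (h : A →₀ ℚ) : (List A →₀ ℚ) →ₗ[ℚ] (List A →₀ ℚ) where
  toFun X := T h X
  map_add' X Y := by
    dsimp only [T]
    rw [← Finsupp.sum_add]
    exact Finsupp.sum_congr fun c _ => by rw [Finsupp.mapDomain_add, smul_add]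
  map_smul' r X := by
    dsimp only [T, RingHom.id_apply]
    rw [Finsupp.smul_sum]
    exact Finsupp.sum_congr fun c _ => by rw [Finsupp.mapDomain_smul, smul_comm]

/-- `T · X` as a linear map in `h`. -/
noncomputable def Tl (X : List A →₀ ℚ) : (A →₀ ℚ) →ₗ[ℚ] (List A →₀ ℚ) where
  toFun h := T h X
  map_add' h₁ h₂ := by
    dsimp only [T]
    rw [Finsupp.sum_add_index' (fun c => by simp) (fun c x₁ x₂ => by rw [add_smul])]
  map_smul' r h := by
    dsimp only [T, RingHom.id_apply]
    rw [Finsupp.sum_smul_index (fun c => by simp), Finsupp.smul_sum]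
    exact Finsupp.sum_congr fun c _ => by rw [smul_smul]

lemma T_smul_right (h : A →₀ ℚ) (r : ℚ) (X : List A →₀ ℚ) :
    T h (r • X) = r • T h X := (Tr h).map_smul r X
lemma T_add_right (h : A →₀ ℚ) (X Y : List A →₀ ℚ) :
    T h (X + Y) = T h X + T h Y := (Tr h).map_add X Y
@[simp] lemma T_zero_right (h : A →₀ ℚ) : T h 0 = 0 := (Tr h).map_zero

lemma T_sum_left {ι M : Type*} [Zero M] (p : ι →₀ M) (F : ι → M → (A →₀ ℚ))
    (X : List A →₀ ℚ) : T (p.sum F) X = p.sum fun i r => T (F i r) X :=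
  map_finsuppSum (Tl X) p F

lemma diamondL_single_right (h : A →₀ ℚ) (c : A) :
    diamondL d h (Finsupp.single c 1) = h.sum fun a x => x • d a c := by
  unfold diamondL
  exact Finsupp.sum_congr fun a _ => by
    rw [Finsupp.sum_single_index (by simp), mul_one]

lemma diamondL_single_left (h : A →₀ ℚ) (a : A) :
    diamondL d (Finsupp.single a 1) h = h.sum fun b y => y • d a b := by
  unfold diamondL
  rw [Finsupp.sum_single_index (by simp)]
  exact Finsupp.sum_congr fun b _ => by rw [one_mul]

lemma mapDomain_fsum {ι M : Type*} [Zero M] (p : ι →₀ M) (F : ι → M → (List A →₀ ℚ))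
    (g : List A → List A) :
    (p.sum F).mapDomain g = p.sum fun i r => (F i r).mapDomain g :=
  map_finsuppSum (Finsupp.lmapDomain ℚ ℚ g) p F

lemma qshL_nil_left (g : List A →₀ ℚ) : qshL d (Finsupp.single [] 1) g = g := by
  unfold qshL
  rw [Finsupp.sum_single_index (by simp)]
  conv_rhs => rw [← Finsupp.sum_single g]
  exact Finsupp.sum_congr fun v _ => by rw [one_mul, qsh_nil_left, Finsupp.smul_single, smul_eq_mul, mul_one]

lemma qshL_nil_right (f : List A →₀ ℚ) : qshL d f (Finsupp.single [] 1) = f := by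
  unfold qshL
  conv_rhs => rw [← Finsupp.sum_single f]
  refine Finsupp.sum_congr fun w _ => ?_
  rw [Finsupp.sum_single_index (by simp), mul_one, qsh_nil_right, Finsupp.smul_single,
    smul_eq_mul, mul_one]

/-- The recursion rule for `qshL` at the level of polynomials. -/
lemma qshL_consc (a b : A) (f g : List A →₀ ℚ) :
    qshL d (f.mapDomain (a :: ·)) (g.mapDomain (b :: ·)) =
      (qshL d f (g.mapDomain (b :: ·))).mapDomain (a :: ·) +
        (qshL d (f.mapDomain (a :: ·)) g).mapDomain (b :: ·) +
        T (d a b) (qshL d f g) := by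
  induction f using Finsupp.induction_linear with
  | zero => simp [Finsupp.mapDomain_zero]
  | add f₁ f₂ hf₁ hf₂ =>
    rw [Finsupp.mapDomain_add, qshL_add_left, qshL_add_left, hf₁, hf₂, qshL_add_left,
      Finsupp.mapDomain_add, qshL_add_left, Finsupp.mapDomain_add, T_add_right]
    abel
  | single w x =>
    induction g using Finsupp.induction_linear with
    | zero => simp [Finsupp.mapDomain_zero]
    | add g₁ g₂ hg₁ hg₂ =>
      rw [Finsupp.mapDomain_add, qshL_add_right, qshL_add_right, hg₁, hg₂, qshL_add_right,
        Finsupp.mapDomain_add, qshL_add_right, Finsupp.mapDomain_add, T_add_right]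
      abel
    | single v y =>
      rw [Finsupp.mapDomain_single, Finsupp.mapDomain_single, qshL_single_single,
        qshL_single_single, qshL_single_single, qshL_single_single, qsh_cons_cons' d,
        smul_add, smul_add, Finsupp.mapDomain_smul, Finsupp.mapDomain_smul, T_smul_right]

lemma T_smul_left (x : ℚ) (k : A →₀ ℚ) (X : List A →₀ ℚ) :
    T (x • k) X = x • T k X := (Tl X).map_smul x k

lemma qshL_T_unfold (h : A →₀ ℚ) (Z g : List A →₀ ℚ) :
    qshL d (T h Z) g = h.sum fun c x => x • qshL d (Z.mapDomain (c :: ·)) g := by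
  show qshL d (h.sum fun c x => x • Z.mapDomain (c :: ·)) g = _
  rw [qshL_sum_left]
  exact Finsupp.sum_congr fun c _ => by rw [qshL_smul_left]

lemma qshL_T_cons (h : A →₀ ℚ) (Z : List A →₀ ℚ) (b : A) (g : List A →₀ ℚ) :
    qshL d (T h Z) (g.mapDomain (b :: ·)) =
      T h (qshL d Z (g.mapDomain (b :: ·))) + (qshL d (T h Z) g).mapDomain (b :: ·) +
        T (diamondL d h (Finsupp.single b 1)) (qshL d Z g) := by
  rw [qshL_T_unfold]
  have step : (h.sum fun c x => x • qshL d (Z.mapDomain (c :: ·)) (g.mapDomain (b :: ·))) =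
      h.sum fun c x =>
        (x • (qshL d Z (g.mapDomain (b :: ·))).mapDomain (c :: ·) +
          x • (qshL d (Z.mapDomain (c :: ·)) g).mapDomain (b :: ·)) +
          x • T (d c b) (qshL d Z g) :=
    Finsupp.sum_congr fun c _ => by rw [qshL_consc d c b, smul_add, smul_add]
  rw [step, Finsupp.sum_add, Finsupp.sum_add]
  have h2 : (h.sum fun c x => x • (qshL d (Z.mapDomain (c :: ·)) g).mapDomain (b :: ·)) =
      (qshL d (T h Z) g).mapDomain (b :: ·) := by
    rw [qshL_T_unfold, mapDomain_fsum]
    exact Finsupp.sum_congr fun c _ => by rw [Finsupp.mapDomain_smul]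
  have h3 : (h.sum fun c x => x • T (d c b) (qshL d Z g)) =
      T (diamondL d h (Finsupp.single b 1)) (qshL d Z g) := by
    rw [diamondL_single_right, T_sum_left]
    exact Finsupp.sum_congr fun c _ => by rw [T_smul_left]
  rw [h2, h3]
  rfl

lemma qshL_cons_T (a : A) (f : List A →₀ ℚ) (h : A →₀ ℚ) (Z : List A →₀ ℚ) :
    qshL d (f.mapDomain (a :: ·)) (T h Z) =
      (qshL d f (T h Z)).mapDomain (a :: ·) + T h (qshL d (f.mapDomain (a :: ·)) Z) +
        T (diamondL d (Finsupp.single a 1) h) (qshL d f Z) := by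
  have unf : ∀ p : List A →₀ ℚ, qshL d p (T h Z) =
      h.sum fun c x => x • qshL d p (Z.mapDomain (c :: ·)) := fun p => by
    show qshL d p (h.sum fun c x => x • Z.mapDomain (c :: ·)) = _
    rw [qshL_sum_right]
    exact Finsupp.sum_congr fun c _ => by rw [qshL_smul_right]
  rw [unf]
  have step : (h.sum fun c x => x • qshL d (f.mapDomain (a :: ·)) (Z.mapDomain (c :: ·))) =
      h.sum fun c x =>
        (x • (qshL d f (Z.mapDomain (c :: ·))).mapDomain (a :: ·) +
          x • (qshL d (f.mapDomain (a :: ·)) Z).mapDomain (c :: ·)) +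
          x • T (d a c) (qshL d f Z) :=
    Finsupp.sum_congr fun c _ => by rw [qshL_consc d a c, smul_add, smul_add]
  rw [step, Finsupp.sum_add, Finsupp.sum_add]
  have h1 : (h.sum fun c x => x • (qshL d f (Z.mapDomain (c :: ·))).mapDomain (a :: ·)) =
      (qshL d f (T h Z)).mapDomain (a :: ·) := by
    rw [unf, mapDomain_fsum]
    exact Finsupp.sum_congr fun c _ => by rw [Finsupp.mapDomain_smul]
  have h3 : (h.sum fun c x => x • T (d a c) (qshL d f Z)) =
      T (diamondL d (Finsupp.single a 1) h) (qshL d f Z) := by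
    rw [diamondL_single_left, T_sum_left]
    exact Finsupp.sum_congr fun c _ => by rw [T_smul_left]
  rw [h1, h3]
  rfl

lemma qsh_comm (hcomm : ∀ a b, d a b = d b a) : ∀ w v : List A, qsh d w v = qsh d v w
  | [], v => by rw [qsh_nil_left, qsh_nil_right]
  | a :: w, [] => by rw [qsh_nil_left, qsh_nil_right]
  | a :: w, b :: v => by
    rw [qsh_cons_cons' d a b, qsh_cons_cons' d b a, hcomm b a,
      qsh_comm hcomm w (b :: v), qsh_comm hcomm (a :: w) v, qsh_comm hcomm w v]
    abel
termination_by w v => w.length + v.length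

lemma qsh_assoc_w (hassoc : ∀ a b c, diamondL d (d a b) (Finsupp.single c 1) =
      diamondL d (Finsupp.single a 1) (d b c)) :
    ∀ u v w : List A,
      qshL d (qsh d u v) (Finsupp.single w 1) = qshL d (Finsupp.single u 1) (qsh d v w)
  | [], v, w => by
    rw [qsh_nil_left, qshL_nil_left, qshL_single_single, one_mul, one_smul]
  | a :: u, [], w => by
    rw [qsh_nil_right, qsh_nil_left]
  | a :: u, b :: v, [] => by
    rw [qsh_nil_right, qshL_nil_right, qshL_single_single, one_mul, one_smul]
  | a :: u', b :: v', e :: w' => by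
    have hCa : qshL d (Finsupp.single u' 1) ((qsh d v' (e :: w')).mapDomain (b :: ·)) +
          qshL d (Finsupp.single u' 1) ((qsh d (b :: v') w').mapDomain (e :: ·)) +
          qshL d (Finsupp.single u' 1) (T (d b e) (qsh d v' w')) =
        qshL d (qsh d u' (b :: v')) (Finsupp.single (e :: w') 1) := by
      rw [← qshL_add_right, ← qshL_add_right, ← qsh_cons_cons' d b e v' w']
      exact (qsh_assoc_w hassoc u' (b :: v') (e :: w')).symm
    have hCe : qshL d ((qsh d u' (b :: v')).mapDomain (a :: ·)) (Finsupp.single w' 1) +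
          qshL d ((qsh d (a :: u') v').mapDomain (b :: ·)) (Finsupp.single w' 1) +
          qshL d (T (d a b) (qsh d u' v')) (Finsupp.single w' 1) =
        qshL d (Finsupp.single (a :: u') 1) (qsh d (b :: v') w') := by
      rw [← qshL_add_left, ← qshL_add_left, ← qsh_cons_cons' d a b u' v']
      exact qsh_assoc_w hassoc (a :: u') (b :: v') w'
    rw [qsh_cons_cons' d a b u' v', qsh_cons_cons' d b e v' w',
      qshL_add_left, qshL_add_left, qshL_add_right, qshL_add_right]
    rw [show (Finsupp.single (e :: w') (1 : ℚ)) =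
        (Finsupp.single w' (1 : ℚ)).mapDomain (e :: ·) from (Finsupp.mapDomain_single).symm,
      show (Finsupp.single (a :: u') (1 : ℚ)) =
        (Finsupp.single u' (1 : ℚ)).mapDomain (a :: ·) from (Finsupp.mapDomain_single).symm]
    rw [qshL_consc d a e (qsh d u' (b :: v')) (Finsupp.single w' 1),
      qshL_consc d b e (qsh d (a :: u') v') (Finsupp.single w' 1),
      qshL_T_cons d (d a b) (qsh d u' v') e (Finsupp.single w' 1),
      qshL_consc d a b (Finsupp.single u' 1) (qsh d v' (e :: w')),
      qshL_consc d a e (Finsupp.single u' 1) (qsh d (b :: v') w'),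
      qshL_cons_T d a (Finsupp.single u' 1) (d b e) (qsh d v' w')]
    simp only [Finsupp.mapDomain_single]
    rw [hassoc a b e,
      qsh_assoc_w hassoc u' (b :: v') w',
      qsh_assoc_w hassoc (a :: u') v' (e :: w'),
      qsh_assoc_w hassoc (a :: u') v' w',
      qsh_assoc_w hassoc u' v' (e :: w'),
      qsh_assoc_w hassoc u' v' w',
      ← hCa, ← hCe]
    simp only [Finsupp.mapDomain_add]
    abel
termination_by u v w => u.length + v.length + w.length

lemma qshL_expand_right (f h : List A →₀ ℚ) :
    qshL d f h = h.sum fun t z => z • qshL d f (Finsupp.single t 1) := by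
  conv_lhs => rw [← Finsupp.sum_single h]
  rw [qshL_sum_right]
  exact Finsupp.sum_congr fun t _ => by
    rw [← qshL_smul_right, Finsupp.smul_single, smul_eq_mul, mul_one]

lemma qshL_expand_left (f h : List A →₀ ℚ) :
    qshL d f h = f.sum fun w x => x • qshL d (Finsupp.single w 1) h := by
  conv_lhs => rw [← Finsupp.sum_single f]
  rw [qshL_sum_left]
  exact Finsupp.sum_congr fun w _ => by
    rw [← qshL_smul_left, Finsupp.smul_single, smul_eq_mul, mul_one]

theorem quasi_shuffle_comm_assoc' (hcomm : ∀ a b, d a b = d b a)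
    (hassoc : ∀ a b c, diamondL d (d a b) (Finsupp.single c 1) =
      diamondL d (Finsupp.single a 1) (d b c)) :
    (∀ f g, qshL d f g = qshL d g f) ∧
      (∀ f g h, qshL d (qshL d f g) h = qshL d f (qshL d g h)) := by
  constructor
  · intro f g
    show (f.sum fun w x => g.sum fun v y => (x * y) • qsh d w v) =
      (g.sum fun v y => f.sum fun w x => (y * x) • qsh d v w)
    rw [Finsupp.sum_comm]
    exact Finsupp.sum_congr fun v _ => Finsupp.sum_congr fun w _ => by
      rw [mul_comm, qsh_comm d hcomm w v]
  · intro f g h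
    have key := qsh_assoc_w d hassoc
    have e1 : qshL d (qshL d f g) h =
        f.sum fun w x => g.sum fun v y => (x * y) • qshL d (qsh d w v) h := by
      show qshL d (f.sum fun w x => g.sum fun v y => (x * y) • qsh d w v) h = _
      rw [qshL_sum_left]
      refine Finsupp.sum_congr fun w _ => ?_
      rw [qshL_sum_left]
      exact Finsupp.sum_congr fun v _ => by rw [qshL_smul_left]
    rw [e1, qshL_expand_left d f (qshL d g h)]
    refine Finsupp.sum_congr fun w _ => ?_
    have hw : qshL d (Finsupp.single w 1) (qshL d g h) =
        g.sum fun v y => h.sum fun t z => (y * z) • qshL d (Finsupp.single w 1) (qsh d v t) := by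
      show qshL d (Finsupp.single w 1)
          (g.sum fun v y => h.sum fun t z => (y * z) • qsh d v t) = _
      rw [qshL_sum_right]
      refine Finsupp.sum_congr fun v _ => ?_
      rw [qshL_sum_right]
      exact Finsupp.sum_congr fun t _ => by rw [qshL_smul_right]
    rw [hw, Finsupp.smul_sum]
    refine Finsupp.sum_congr fun v _ => ?_
    have hv : qshL d (qsh d w v) h =
        h.sum fun t z => z • qshL d (Finsupp.single w 1) (qsh d v t) := by
      rw [qshL_expand_right]
      exact Finsupp.sum_congr fun t _ => by rw [key w v t]
    rw [hv, Finsupp.smul_sum, Finsupp.smul_sum]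
    exact Finsupp.sum_congr fun t _ => by rw [smul_smul, smul_smul, mul_assoc]

end QuasiShuffleAux

/-- Hoffman's theorem: if `◊` is commutative and associative on `ℚA`, then the quasi-shuffle
product on `ℚ⟨A⟩` is commutative and associative. -/
theorem quasi_shuffle_comm_assoc {A : Type*} (d : A → A → (A →₀ ℚ))
    (hcomm : ∀ a b, d a b = d b a)
    (hassoc : ∀ a b c, diamondL d (d a b) (Finsupp.single c 1) =
      diamondL d (Finsupp.single a 1) (d b c)) :
    (∀ f g, qshL d f g = qshL d g f) ∧
      (∀ f g h, qshL d (qshL d f g) h = qshL d f (qshL d g h)) := by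
  exact quasi_shuffle_comm_assoc' d hcomm hassoc
end
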